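/- arXiv:2307.11849 — 8 statements merged into one kernel-verified Lean document; each statement's English description precedes it below -/
import Mathlib

section
/- Let L = Q(√m) be an imaginary quadratic field with m squarefree, m < 0, and m ≡ 1 (mod 4). Then the minimum of the absolute multiplicative Weil height H(α) over algebraic integers α ∈ O_L with L = Q(α) equals (1/2)(1 + |Δ_L|)^{1/2}, where Δ_L = m is the discriminant of L. -/
open NumberField

/-- `c_K = (2/π)^{s/d} |Δ_K|^{1/(2d)}`. -/
noncomputable def minkowskiConst (K : Type*) [Field K] [NumberField K] : ℝ :=
  (2 / Real.pi) ^ ((InfinitePlace.nrComplexPlaces K : ℝ) / (Module.finrank ℚ K)) *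
    |(discr K : ℝ)| ^ ((1 : ℝ) / (2 * (Module.finrank ℚ K : ℝ)))

/-- Absolute multiplicative Weil height of an algebraic integer of `K`. -/
noncomputable def intHeight {K : Type*} [Field K] [NumberField K] (α : K) : ℝ :=
  (∏ φ : K →+* ℂ, max 1 ‖φ α‖) ^ ((Module.finrank ℚ K : ℝ)⁻¹)

/-- The normalized absolute value `|·|_v = ‖·‖_v^{d_v/d}` at an infinite place. -/
noncomputable def placeNorm {K : Type*} [Field K] [NumberField K]
    (v : InfinitePlace K) (α : K) : ℝ :=
  (v α) ^ ((v.mult : ℝ) / (Module.finrank ℚ K : ℝ))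

/-! Write `α = x + y r` with `x y : ℚ`. Every embedding sends `r` to a purely imaginary square
root of `m`, so `‖φ α‖² = x² - m y²` at both embeddings and `H(α) = max 1 √(x² - m y²)`.
If `α` is an integral generator then `y ≠ 0`, and its minimal polynomial `X² - 2x X + (x² - m y²)`
has integer coefficients. Its discriminant `m (2y)²` is then an integer, so `v = 2y ∈ ℤ` because
`m` is squarefree, and with `u = 2x` we get `4 (x² - m y²) = u² - m v²` with `v ≠ 0` and, as
`m ≡ 1 mod 4`, `u ≡ v mod 2`. Hence `4 (x² - m y²) ≥ 1 - m = 1 + |m|`, with equality at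
`α = (1 + r) / 2`. -/

open Polynomial

theorem Rat.exists_intCast_eq_of_squarefree_mul_sq {m : ℤ} (hm : Squarefree m) {t : ℚ} {k : ℤ}
    (h : m * t ^ 2 = k) : ∃ s : ℤ, (s : ℚ) = t := by
  refine ⟨t.num, (Rat.den_eq_one_iff t).1 ?_⟩
  have hmul : m * t.num ^ 2 = k * (t.den : ℤ) ^ 2 := by
    have : (m * t.num ^ 2 : ℚ) = k * t.den ^ 2 := by rw [← Rat.mul_den_eq_num, ← h]; ring
    exact_mod_cast this
  have hcop : IsCoprime ((t.den : ℤ) ^ 2) (t.num ^ 2) :=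
    (Int.isCoprime_iff_gcd_eq_one.2 (by simpa [Int.gcd] using t.reduced.symm)).pow
  have hdvd : (t.den : ℤ) * t.den ∣ m := by
    rw [← sq]; exact hcop.dvd_of_dvd_mul_right ⟨k, by rw [hmul]; ring⟩
  simpa using Int.isUnit_iff_natAbs_eq.1 (hm _ hdvd)

theorem Int.one_sub_le_sq_sub_mul_sq {m u v : ℤ} (hneg : m < 0) (hmod : m % 4 = 1) (hv : v ≠ 0)
    (h4 : 4 ∣ u ^ 2 - m * v ^ 2) : 1 - m ≤ u ^ 2 - m * v ^ 2 := by
  obtain ⟨k, rfl⟩ : ∃ k, m = 4 * k + 1 := ⟨m / 4, by omega⟩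
  rcases Int.even_or_odd' v with ⟨b, rfl | rfl⟩
  · have hb : 1 ≤ b ^ 2 := by
      have : b ≠ 0 := by rintro rfl; simp at hv
      simpa using one_le_pow₀ (n := 2) (Int.one_le_abs this)
    nlinarith [sq_nonneg u]
  · rcases Int.even_or_odd' u with ⟨a, rfl | rfl⟩
    · obtain ⟨c, hc⟩ := h4
      have : (4 : ℤ) ∣ 1 :=
        ⟨a ^ 2 - (4 * k + 1) * (b ^ 2 + b) - k - c, by linear_combination -hc⟩
      norm_num at this
    · have ha : 0 ≤ a * (a + 1) := by rcases le_or_gt 0 a with h | h <;> nlinarith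
      have hb : 0 ≤ b * (b + 1) := by rcases le_or_gt 0 b with h | h <;> nlinarith
      nlinarith

theorem Complex.normSq_add_mul_of_sq_eq_neg {z : ℂ} {c : ℝ} (hc : c < 0) (hz : z ^ 2 = c)
    (x y : ℝ) : normSq (x + y * z) = x ^ 2 - c * y ^ 2 := by
  have hre : z.re ^ 2 - z.im ^ 2 = c := by simpa [sq] using congrArg re hz
  have him : z.re * z.im = 0 := by
    have := congrArg im hz; simp [sq] at this; linarith
  have hz0 : z.re = 0 := (mul_eq_zero.1 him).resolve_right fun h => by
    rw [h] at hre; nlinarith [sq_nonneg z.re]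
  rw [hz0] at hre
  rw [normSq_apply]
  simp only [add_re, add_im, mul_re, mul_im, ofReal_re, ofReal_im, hz0]
  linear_combination (-y ^ 2) * hre

theorem intHeight_eq_of_forall_norm_eq {K : Type*} [Field K] [NumberField K] {α : K} {c : ℝ}
    (h : ∀ φ : K →+* ℂ, ‖φ α‖ = c) : intHeight α = max 1 c := by
  rw [intHeight, Finset.prod_congr rfl fun φ _ => by rw [h φ], Finset.prod_const,
    Finset.card_univ, Embeddings.card]
  exact Real.pow_rpow_inv_natCast (zero_le_one.trans (le_max_left _ _)) Module.finrank_pos.ne'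

theorem Polynomial.Monic.aeval_of_natDegree_eq_two {R A : Type*} [CommRing R] [CommRing A]
    [Algebra R A] {p : R[X]} (hp : p.Monic) (h2 : p.natDegree = 2) (x : A) :
    aeval x p = x ^ 2 + algebraMap R A (p.coeff 1) * x + algebraMap R A (p.coeff 0) := by
  have hc2 : p.coeff 2 = 1 := h2 ▸ hp.coeff_natDegree
  simp [aeval_eq_sum_range, h2, Finset.sum_range_succ, hc2, Algebra.smul_def]
  ring

theorem exists_int_sq_add_mul_add_eq_zero {K : Type*} [Field K] [CharZero K] {α : K}
    (hα : IsIntegral ℤ α) (h2 : (minpoly ℚ α).natDegree = 2) :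
    ∃ u w : ℤ, α ^ 2 + u * α + w = 0 := by
  have hdeg : (minpoly ℤ α).natDegree = 2 := by
    rwa [minpoly.isIntegrallyClosed_eq_field_fractions' ℚ hα,
      natDegree_map_eq_of_injective (algebraMap ℤ ℚ).injective_int] at h2
  refine ⟨(minpoly ℤ α).coeff 1, (minpoly ℤ α).coeff 0, ?_⟩
  simpa [(minpoly.monic hα).aeval_of_natDegree_eq_two hdeg] using minpoly.aeval ℤ α

section ImaginaryQuadratic

variable {L : Type*} [Field L] {m : ℤ} {r : L}

theorem eq_zero_of_ratCast_add_mul_eq_zero [CharZero L] (hr : r ^ 2 = m) (hm : m < 0)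
    {a b : ℚ} (h : (a : L) + b * r = 0) : a = 0 ∧ b = 0 := by
  have hb : b = 0 := by
    by_contra hb
    have hL : ((m * b ^ 2 : ℚ) : L) = ((a ^ 2 : ℚ) : L) := by
      push_cast
      linear_combination (-(b : L) ^ 2) * hr + ((b : L) * r - a) * h
    have : (m : ℚ) * b ^ 2 = a ^ 2 := by exact_mod_cast hL
    have hmq : (m : ℚ) < 0 := by exact_mod_cast hm
    nlinarith [sq_nonneg a, sq_pos_of_ne_zero hb]
  subst hb
  simpa using h

theorem eq_of_sq_add_mul_add_eq_zero [CharZero L] (hr : r ^ 2 = m) (hm : m < 0) {x y u w : ℚ}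
    (hy : y ≠ 0) (h : ((x : L) + y * r) ^ 2 + u * (x + y * r) + w = 0) :
    u = -2 * x ∧ w = x ^ 2 - m * y ^ 2 := by
  obtain ⟨h₀, h₁⟩ := eq_zero_of_ratCast_add_mul_eq_zero hr hm
    (a := x ^ 2 + m * y ^ 2 + u * x + w) (b := (2 * x + u) * y)
    (by push_cast; linear_combination h - (y : L) ^ 2 * hr)
  have hu : u = -2 * x := by linarith [(mul_eq_zero.1 h₁).resolve_right hy]
  exact ⟨hu, by linear_combination h₀ - x * hu⟩

theorem isIntegral_half_add_half_mul [CharZero L] (hr : r ^ 2 = m) (hmod : m % 4 = 1) :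
    IsIntegral ℤ (((1 / 2 : ℚ) : L) + (1 / 2 : ℚ) * r) := by
  obtain ⟨k, hk⟩ : ∃ k, m = 4 * k + 1 := ⟨m / 4, by omega⟩
  refine ⟨X ^ 2 - X - C k, by monicity!, ?_⟩
  have hkL : (m : L) = 4 * k + 1 := by exact_mod_cast hk
  rw [← aeval_def]
  simp
  linear_combination hr / 4 + hkL / 4

variable [NumberField L]

theorem exists_ratCast_add_mul_eq (hr : r ^ 2 = m) (hgen : IntermediateField.adjoin ℚ {r} = ⊤)
    (α : L) : ∃ x y : ℚ, α = x + y * r := by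
  have hα : α ∈ Algebra.adjoin ℚ {r} := by
    rw [← IntermediateField.adjoin_simple_toSubalgebra_of_isAlgebraic
      (Algebra.IsAlgebraic.isAlgebraic r), hgen]
    trivial
  induction hα using Algebra.adjoin_induction with
  | mem s hs => exact ⟨0, 1, by rw [Set.mem_singleton_iff.1 hs]; simp⟩
  | algebraMap q => exact ⟨q, 0, by simp⟩
  | add s t _ _ hs ht =>
    obtain ⟨⟨x₁, y₁, rfl⟩, ⟨x₂, y₂, rfl⟩⟩ := And.intro hs ht
    exact ⟨x₁ + x₂, y₁ + y₂, by push_cast; ring⟩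
  | mul s t _ _ hs ht =>
    obtain ⟨⟨x₁, y₁, rfl⟩, ⟨x₂, y₂, rfl⟩⟩ := And.intro hs ht
    exact ⟨x₁ * x₂ + m * y₁ * y₂, x₁ * y₂ + x₂ * y₁, by
      push_cast; linear_combination (y₁ * y₂ : L) * hr⟩

theorem finrank_eq_two_of_sq_eq_intCast (hr : r ^ 2 = m) (hm : m < 0)
    (hgen : IntermediateField.adjoin ℚ {r} = ⊤) : Module.finrank ℚ L = 2 := by
  have hli : LinearIndependent ℚ ![(1 : L), r] := LinearIndependent.pair_iff.2 fun a b h =>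
    eq_zero_of_ratCast_add_mul_eq_zero hr hm (by simpa [Rat.smul_def] using h)
  have hsp : ⊤ ≤ Submodule.span ℚ (Set.range ![(1 : L), r]) := by
    rintro α -
    obtain ⟨x, y, rfl⟩ := exists_ratCast_add_mul_eq hr hgen α
    rw [Matrix.range_cons_cons_empty]
    exact Submodule.mem_span_pair.2 ⟨x, y, by simp [Rat.smul_def]⟩
  simpa using Module.finrank_eq_card_basis (Module.Basis.mk hli hsp)

theorem adjoin_ratCast_add_mul_eq_top_iff (hr : r ^ 2 = m) (hm : m < 0)
    (hgen : IntermediateField.adjoin ℚ {r} = ⊤) (x y : ℚ) :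
    IntermediateField.adjoin ℚ {(x : L) + y * r} = ⊤ ↔ y ≠ 0 := by
  constructor
  · rintro htop rfl
    have hbot : IntermediateField.adjoin ℚ {((x : ℚ) : L) + (0 : ℚ) * r} = ⊥ :=
      IntermediateField.adjoin_simple_eq_bot_iff.2 (by simp)
    have := IntermediateField.bot_eq_top_iff_finrank_eq_one.1 (hbot ▸ htop)
    rw [finrank_eq_two_of_sq_eq_intCast hr hm hgen] at this
    omega
  · intro hy
    rw [eq_top_iff, ← hgen, IntermediateField.adjoin_simple_le_iff]
    have hα := IntermediateField.mem_adjoin_simple_self ℚ ((x : L) + y * r)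
    have hsolve : (y : L)⁻¹ * ((x + y * r) - x) = r := by field_simp; ring
    have key := mul_mem (inv_mem (SubfieldClass.ratCast_mem _ y))
      (sub_mem hα (SubfieldClass.ratCast_mem _ x))
    rwa [hsolve] at key

theorem norm_apply_ratCast_add_mul (hr : r ^ 2 = m) (hm : m < 0) (φ : L →+* ℂ) (x y : ℚ) :
    ‖φ (x + y * r)‖ = √(x ^ 2 - m * y ^ 2) := by
  have hφr : φ r ^ 2 = ((m : ℝ) : ℂ) := by rw [← map_pow, hr]; simp
  rw [← Complex.normSq_add_mul_of_sq_eq_neg (by exact_mod_cast hm) hφr,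
    Complex.normSq_eq_norm_sq, Real.sqrt_sq (norm_nonneg _)]
  simp

theorem intHeight_ratCast_add_mul (hr : r ^ 2 = m) (hm : m < 0) (x y : ℚ) :
    intHeight ((x : L) + y * r) = max 1 √(x ^ 2 - m * y ^ 2) :=
  intHeight_eq_of_forall_norm_eq fun φ => norm_apply_ratCast_add_mul hr hm φ x y

theorem one_sub_le_four_mul_of_isIntegral (hsf : Squarefree m) (hm : m < 0) (hmod : m % 4 = 1)
    (hr : r ^ 2 = m) (hgen : IntermediateField.adjoin ℚ {r} = ⊤) {x y : ℚ}
    (hint : IsIntegral ℤ ((x : L) + y * r)) (hy : y ≠ 0) :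
    (1 - m : ℚ) ≤ 4 * (x ^ 2 - m * y ^ 2) := by
  have hdeg : (minpoly ℚ ((x : L) + y * r)).natDegree = 2 := by
    rw [← IntermediateField.adjoin.finrank (IsIntegral.of_finite ℚ _),
      (adjoin_ratCast_add_mul_eq_top_iff hr hm hgen x y).2 hy, IntermediateField.finrank_top',
      finrank_eq_two_of_sq_eq_intCast hr hm hgen]
  obtain ⟨u, w, huw⟩ := exists_int_sq_add_mul_add_eq_zero hint hdeg
  obtain ⟨hu, hw⟩ :=
    eq_of_sq_add_mul_add_eq_zero hr hm hy (u := u) (w := w) (by exact_mod_cast huw)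
  obtain ⟨v, hv⟩ := Rat.exists_intCast_eq_of_squarefree_mul_sq hsf (t := 2 * y)
    (k := u ^ 2 - 4 * w) (by push_cast; rw [hu, hw]; ring)
  have h4w : u ^ 2 - m * v ^ 2 = 4 * w := by
    have : (u ^ 2 - m * v ^ 2 : ℚ) = 4 * w := by rw [hv, hu, hw]; ring
    exact_mod_cast this
  have hv0 : v ≠ 0 := by rintro rfl; push_cast at hv; exact hy (by linarith)
  have key := Int.one_sub_le_sq_sub_mul_sq hm hmod hv0 ⟨w, h4w⟩
  rw [h4w] at key
  rw [← hw]
  exact_mod_cast key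

end ImaginaryQuadratic

theorem statement0_general (m : ℤ) (hsf : Squarefree m) (hneg : m < 0) (hmod : m % 4 = 1)
    (L : Type*) [Field L] [NumberField L] (r : L) (hr : r ^ 2 = (m : L))
    (hgenL : IntermediateField.adjoin ℚ {r} = ⊤) :
    IsLeast {H : ℝ | ∃ α : 𝓞 L, IntermediateField.adjoin ℚ {(α : L)} = ⊤ ∧
        intHeight (α : L) = H}
      ((1 / 2) * (1 + |(m : ℝ)|) ^ ((1 : ℝ) / 2)) := by
  have hm3 : (m : ℝ) ≤ -3 := by exact_mod_cast (show m ≤ -3 by omega)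
  have htarget : (1 / 2 : ℝ) * (1 + |(m : ℝ)|) ^ ((1 : ℝ) / 2) = √((1 - m) / 4) := by
    rw [Real.sqrt_div (by linarith), show (4 : ℝ) = 2 ^ 2 by norm_num,
      Real.sqrt_sq zero_le_two, ← Real.sqrt_eq_rpow, abs_of_neg (by linarith), sub_eq_add_neg]
    ring
  rw [htarget]
  refine ⟨⟨⟨_, isIntegral_half_add_half_mul hr hmod⟩,
    (adjoin_ratCast_add_mul_eq_top_iff hr hneg hgenL _ _).2 (by norm_num), ?_⟩, ?_⟩
  · show intHeight (((1 / 2 : ℚ) : L) + (1 / 2 : ℚ) * r) = _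
    rw [intHeight_ratCast_add_mul hr hneg, max_eq_right]
    · congr 1; push_cast; ring
    · push_cast; rw [Real.le_sqrt] <;> linarith
  · rintro _ ⟨α, hα, rfl⟩
    obtain ⟨x, y, hxy⟩ := exists_ratCast_add_mul_eq hr hgenL α
    rw [hxy] at hα ⊢
    have hbound := one_sub_le_four_mul_of_isIntegral hsf hneg hmod hr hgenL
      (by simpa [hxy] using α.isIntegral_coe)
      ((adjoin_ratCast_add_mul_eq_top_iff hr hneg hgenL x y).1 hα)
    rw [intHeight_ratCast_add_mul hr hneg]
    refine (Real.sqrt_le_sqrt ?_).trans (le_max_right _ _)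
    have : ((1 - m : ℚ) : ℝ) ≤ ((4 * (x ^ 2 - m * y ^ 2) : ℚ) : ℝ) := by exact_mod_cast hbound
    push_cast at this
    linarith

/-- For an imaginary quadratic field $L=\mathbb{Q}(\sqrt m)$ with $m$ squarefree, $m<0$,
$m\equiv 1\pmod 4$ (so $\Delta_L = m$), the minimum of the Weil height over integral
generators of $L$ is $\frac12(1+|\Delta_L|)^{1/2}$. -/
theorem statement0 (m : ℤ) (hsf : Squarefree m) (hneg : m < 0) (hmod : m % 4 = 1)
    (L : Type*) [Field L] [NumberField L] (r : L) (hr : r ^ 2 = (m : L))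
    (hgenL : IntermediateField.adjoin ℚ {r} = ⊤)
    (hdisc : discr L = m) :
    IsLeast {H : ℝ | ∃ α : 𝓞 L, IntermediateField.adjoin ℚ {(α : L)} = ⊤ ∧
        intHeight (α : L) = H}
      ((1 / 2) * (1 + |(m : ℝ)|) ^ ((1 : ℝ) / 2)) :=
  statement0_general m hsf hneg hmod L r hr hgenL
end

section
/- Let L = Q(√m) be an imaginary quadratic field with m squarefree and m < 0, and suppose the torsion subgroup of L^× is {±1}. Then c_L = (2/π)^{1/2}|Δ_L|^{1/4} < min{H(α) : α ∈ O_L, L = Q(α)}. -/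
open NumberField

/-!
Let `φ` be a complex embedding of the imaginary quadratic field `L`. The conjugates of an integral
generator `α` are `φ α` and its complex conjugate, so `H(α) = max(1, |φ α|)` and `|N(α)| = |φ α|²`.
As `α ∉ ℚ` is not a root of unity, Kronecker's theorem rules out `|N(α)| = 1`, so `|φ α|² ≥ 2`.
Since `ℤ[α] ⊆ 𝓞_L`, `|Δ_L| ≤ |disc(α, 1)| = |φ α - conj (φ α)|² ≤ 4 |φ α|²`, hence
`c_L² ≤ (2/π) · 2 |φ α| < |φ α|²`, the last step because `|φ α| ≥ √2 > 4/π`.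
-/

open Module Polynomial IntermediateField

theorem finrank_eq_two_of_sq_eq {F E : Type*} [Field F] [Field E] [Algebra F E] {r : E} {q : F}
    (hq : ∀ b : F, b ^ 2 ≠ q) (hr : r ^ 2 = algebraMap F E q) (hgen : F⟮r⟯ = ⊤) :
    finrank F E = 2 := by
  have hroot : aeval r (X ^ 2 - C q) = 0 := by simp [hr]
  have hmonic : (X ^ 2 - C q).Monic := monic_X_pow_sub_C q two_ne_zero
  have hmin : minpoly F r = X ^ 2 - C q :=
    (minpoly.eq_of_irreducible_of_monic (X_pow_sub_C_irreducible_of_prime Nat.prime_two hq)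
      hroot hmonic).symm
  rw [← finrank_top', ← hgen, adjoin.finrank ⟨_, hmonic, hroot⟩, hmin, natDegree_X_pow_sub_C]

theorem notMem_range_algebraMap_of_adjoin_eq_top {F E : Type*} [Field F] [Field E] [Algebra F E]
    (hE : finrank F E ≠ 1) {x : E} (hx : F⟮x⟯ = ⊤) : x ∉ Set.range (algebraMap F E) := by
  rintro ⟨q, rfl⟩
  apply hE
  rw [← bot_eq_top_iff_finrank_eq_one, ← hx]
  exact (adjoin_simple_eq_bot_iff.mpr (IntermediateField.algebraMap_mem _ q)).symm

theorem sqrt_two_div_pi_mul_rpow_lt {D t : ℝ} (hD0 : 0 ≤ D) (hD : D ≤ 4 * t ^ 2) (ht : 2 ≤ t ^ 2)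
    (ht0 : 0 ≤ t) : (2 / Real.pi) ^ (1 / 2 : ℝ) * D ^ (1 / 4 : ℝ) < t := by
  have hπ := Real.pi_gt_three
  have hsqrt : √D ≤ 2 * t := (Real.sqrt_le_left (by positivity)).mpr (by linarith)
  have hsq : ((2 / Real.pi) ^ (1 / 2 : ℝ) * D ^ (1 / 4 : ℝ)) ^ 2 = 2 / Real.pi * √D := by
    rw [mul_pow, ← Real.rpow_natCast, ← Real.rpow_natCast (D ^ _), ← Real.rpow_mul (by positivity),
      ← Real.rpow_mul hD0, Real.sqrt_eq_rpow]
    norm_num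
  refine lt_of_pow_lt_pow_left₀ 2 ht0 ?_
  have h4t : 4 < 3 * t := by nlinarith
  have hπt : 4 * t < Real.pi * t ^ 2 := by nlinarith
  rw [hsq, div_mul_eq_mul_div, div_lt_iff₀ (by positivity)]
  linarith

namespace NumberField

variable {K : Type*} [Field K]

theorem IsTotallyComplex.conjugate_ne_self [IsTotallyComplex K] (φ : K →+* ℂ) :
    ComplexEmbedding.conjugate φ ≠ φ := fun h =>
  IsTotallyComplex.complexEmbedding_not_isReal φ (ComplexEmbedding.isReal_iff.mpr h)

theorem isTotallyComplex_of_sq_eq {r : K} {q : ℚ} (hq : q < 0) (hr : r ^ 2 = q) :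
    IsTotallyComplex K := by
  refine ⟨fun w => InfinitePlace.not_isReal_iff_isComplex.mp fun hw => ?_⟩
  have hφ := InfinitePlace.isReal_iff.mp hw
  have h := congrArg w.embedding hr
  rw [map_pow, map_ratCast, ← hφ.coe_embedding_apply] at h
  have h' : hφ.embedding r ^ 2 = q := by exact_mod_cast h
  have : (q : ℝ) < 0 := by exact_mod_cast hq
  nlinarith [sq_nonneg (hφ.embedding r)]

variable [NumberField K]

theorem exists_discr_eq_sq_mul_discr {ι : Type*} [Fintype ι] [DecidableEq ι]
    (b : Basis ι ℚ K) (hb : ∀ i, IsIntegral ℤ (b i)) :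
    ∃ c : ℤ, c ≠ 0 ∧ Algebra.discr ℚ b = c ^ 2 * discr K := by
  set B := (integralBasis K).reindex ((integralBasis K).indexEquiv b)
  have hB : Algebra.discr ℚ B = discr K := by
    rw [Basis.coe_reindex, Algebra.discr_reindex, coe_discr]
  have hint : ∀ i j, IsIntegral ℤ (B.toMatrix b i j) := by
    intro i j
    rw [Basis.toMatrix_apply, Basis.repr_reindex_apply]
    exact (congrArg (IsIntegral ℤ) (integralBasis_repr_apply (K := K) ⟨b j, hb j⟩ _)).mpr
      isIntegral_algebraMap
  obtain ⟨c, hc⟩ := IsIntegrallyClosed.isIntegral_iff.mp (IsIntegral.det hint)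
  have hdiscr : Algebra.discr ℚ b = c ^ 2 * discr K := by
    rw [← B.toMatrix_map_vecMul b, Algebra.discr_of_matrix_vecMul, hB, ← hc]
    rfl
  refine ⟨c, fun hc0 => Algebra.discr_not_zero_of_basis ℚ b ?_, hdiscr⟩
  rw [hdiscr, hc0]
  simp

theorem abs_discr_le_abs_discr {ι : Type*} [Fintype ι] [DecidableEq ι]
    (b : Basis ι ℚ K) (hb : ∀ i, IsIntegral ℤ (b i)) :
    |(discr K : ℚ)| ≤ |Algebra.discr ℚ b| := by
  obtain ⟨c, hc0, hc⟩ := exists_discr_eq_sq_mul_discr b hb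
  have : (1 : ℚ) ≤ (c : ℚ) ^ 2 := by
    exact_mod_cast one_le_sq_iff_one_le_abs c |>.mpr (Int.one_le_abs hc0)
  rw [hc, abs_mul, abs_pow, sq_abs]
  exact le_mul_of_one_le_left (abs_nonneg _) this

theorem algebraMap_discr_pair (hK : finrank ℚ K = 2) {φ ψ : K →+* ℂ} (hφψ : φ ≠ ψ) (x : K) :
    algebraMap ℚ ℂ (Algebra.discr ℚ ![x, 1]) = (φ x - ψ x) ^ 2 := by
  have hinj : Function.Injective ![φ.toRatAlgHom, ψ.toRatAlgHom] :=
    injective_pair_iff_ne.mpr fun h => hφψ ((RingHom.equivRatAlgHom K ℂ).injective h)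
  let e : Fin 2 ≃ (K →ₐ[ℚ] ℂ) := Equiv.ofBijective _ <|
    (Fintype.bijective_iff_injective_and_card _).mpr ⟨hinj, by
      rw [← Fintype.card_congr (RingHom.equivRatAlgHom K ℂ), Embeddings.card, hK]; rfl⟩
  rw [Algebra.discr_eq_det_embeddingsMatrixReindex_pow_two ℚ ℂ _ e, Matrix.det_fin_two]
  simp [Algebra.embeddingsMatrixReindex, Algebra.embeddingsMatrix, e]

theorem abs_discr_le_norm_sub_sq (hK : finrank ℚ K = 2) {φ ψ : K →+* ℂ} (hφψ : φ ≠ ψ) {x : K}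
    (hx : IsIntegral ℤ x) (hxQ : x ∉ Set.range (algebraMap ℚ K)) :
    |(discr K : ℝ)| ≤ ‖φ x - ψ x‖ ^ 2 := by
  have hli : LinearIndependent ℚ ![x, 1] := by
    refine linearIndependent_fin2.mpr ⟨one_ne_zero, fun a ha => hxQ ⟨a, ?_⟩⟩
    simpa [Algebra.algebraMap_eq_smul_one] using ha
  let b := basisOfLinearIndependentOfCardEqFinrank hli (by simp [hK])
  have hb : ⇑b = ![x, 1] := coe_basisOfLinearIndependentOfCardEqFinrank hli _
  have hbint : ∀ i, IsIntegral ℤ (b i) := by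
    intro i
    fin_cases i
    · simpa [hb] using hx
    · simpa [hb] using isIntegral_one
  have hle := abs_discr_le_abs_discr b hbint
  rw [hb] at hle
  calc |(discr K : ℝ)| = ((|(discr K : ℚ)| : ℚ) : ℝ) := by push_cast; rfl
    _ ≤ ((|Algebra.discr ℚ ![x, 1]| : ℚ) : ℝ) := by exact_mod_cast hle
    _ = ‖algebraMap ℚ ℂ (Algebra.discr ℚ ![x, 1])‖ := by simp
    _ = ‖φ x - ψ x‖ ^ 2 := by rw [algebraMap_discr_pair hK hφψ, norm_pow]

section ImaginaryQuadratic

variable [IsTotallyComplex K]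

theorem nrComplexPlaces_eq_one (hK : finrank ℚ K = 2) : InfinitePlace.nrComplexPlaces K = 1 := by
  have := IsTotallyComplex.finrank (K := K)
  omega

open scoped Classical in
theorem univ_eq_pair_conjugate (hK : finrank ℚ K = 2) (φ : K →+* ℂ) :
    (Finset.univ : Finset (K →+* ℂ)) = {φ, ComplexEmbedding.conjugate φ} := by
  refine (Finset.eq_univ_of_card _ ?_).symm
  rw [Finset.card_pair (IsTotallyComplex.conjugate_ne_self φ).symm, Embeddings.card, hK]

theorem abs_norm_eq_norm_sq (hK : finrank ℚ K = 2) (φ : K →+* ℂ) (x : K) :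
    |(Algebra.norm ℚ x : ℝ)| = ‖φ x‖ ^ 2 := by
  have : Subsingleton (InfinitePlace K) := by
    rw [← Fintype.card_le_one_iff_subsingleton,
      InfinitePlace.card_eq_nrRealPlaces_add_nrComplexPlaces,
      IsTotallyComplex.nrRealPlaces_eq_zero, nrComplexPlaces_eq_one hK]
  rw [← Rat.cast_abs, ← InfinitePlace.prod_eq_abs_norm,
    Fintype.prod_subsingleton _ (InfinitePlace.mk φ),
    IsTotallyComplex.mult_eq, InfinitePlace.apply]

theorem intHeight_eq_max_one_norm (hK : finrank ℚ K = 2) (φ : K →+* ℂ) (x : K) :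
    intHeight x = max 1 ‖φ x‖ := by
  classical
  rw [intHeight, univ_eq_pair_conjugate hK φ,
    Finset.prod_pair (IsTotallyComplex.conjugate_ne_self φ).symm,
    ComplexEmbedding.conjugate_coe_eq, Complex.norm_conj, ← sq, hK]
  exact Real.pow_rpow_inv_natCast (by positivity) two_ne_zero

theorem isOfFinOrder_of_norm_eq_one (hK : finrank ℚ K = 2) (φ : K →+* ℂ) {x : K}
    (hx : IsIntegral ℤ x) (h : ‖φ x‖ = 1) : IsOfFinOrder x := by
  classical
  obtain ⟨n, hn, hpow⟩ := Embeddings.pow_eq_one_of_norm_eq_one K ℂ hx fun ψ => by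
    have hψ := Finset.mem_univ ψ
    rw [univ_eq_pair_conjugate hK φ, Finset.mem_insert, Finset.mem_singleton] at hψ
    obtain rfl | rfl := hψ
    · exact h
    · rwa [ComplexEmbedding.conjugate_coe_eq, Complex.norm_conj]
  exact isOfFinOrder_iff_pow_eq_one.mpr ⟨n, hn, hpow⟩

theorem two_le_norm_sq (hK : finrank ℚ K = 2) (φ : K →+* ℂ) {α : 𝓞 K} (hα0 : α ≠ 0)
    (hα : ¬IsOfFinOrder (α : K)) : 2 ≤ ‖φ α‖ ^ 2 := by
  have hN : ((|Algebra.norm ℤ α| : ℤ) : ℝ) = ‖φ α‖ ^ 2 := by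
    rw [← abs_norm_eq_norm_sq hK φ, ← Algebra.coe_norm_int]
    push_cast; rfl
  have hN0 : Algebra.norm ℤ α ≠ 0 := Algebra.norm_ne_zero_iff.mpr hα0
  have hN1 : |Algebra.norm ℤ α| ≠ 1 := fun h1 =>
    hα <| isOfFinOrder_of_norm_eq_one hK φ α.isIntegral_coe <|
      (pow_eq_one_iff_of_nonneg (norm_nonneg _) two_ne_zero).mp (by rw [← hN, h1, Int.cast_one])
  have : (2 : ℤ) ≤ |Algebra.norm ℤ α| := by
    have := Int.one_le_abs hN0
    omega
  rw [← hN]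
  exact_mod_cast this

end ImaginaryQuadratic

end NumberField

theorem statement2_general (m : ℤ) (hneg : m < 0)
    (L : Type*) [Field L] [NumberField L] (r : L) (hr : r ^ 2 = (m : L))
    (hgenL : IntermediateField.adjoin ℚ {r} = ⊤)
    (htor : ∀ x : L, (∃ n : ℕ, 0 < n ∧ x ^ n = 1) → x = 1 ∨ x = -1) :
    ∀ α : 𝓞 L, IntermediateField.adjoin ℚ {(α : L)} = ⊤ →
      minkowskiConst L < intHeight (α : L) := by
  intro α hgen
  have hmQ : (m : ℚ) < 0 := by exact_mod_cast hneg
  have hK : finrank ℚ L = 2 :=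
    finrank_eq_two_of_sq_eq (fun b hb => (sq_nonneg b).not_gt (hb ▸ hmQ)) (by simpa using hr) hgenL
  have : IsTotallyComplex L := isTotallyComplex_of_sq_eq hmQ (by simpa using hr)
  have hαQ := notMem_range_algebraMap_of_adjoin_eq_top (by omega) hgen
  have hα0 : α ≠ 0 := fun h => hαQ ⟨0, by simp [h]⟩
  have hαtors : ¬IsOfFinOrder (α : L) := fun h => by
    rcases htor _ (isOfFinOrder_iff_pow_eq_one.mp h) with h1 | h1
    · exact hαQ ⟨1, by simp [h1]⟩
    · exact hαQ ⟨-1, by simp [h1]⟩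
  obtain ⟨φ⟩ : Nonempty (L →+* ℂ) := inferInstance
  have ht : 2 ≤ ‖φ α‖ ^ 2 := two_le_norm_sq hK φ hα0 hαtors
  have hdiscr : |(discr L : ℝ)| ≤ 4 * ‖φ α‖ ^ 2 :=
    calc |(discr L : ℝ)| ≤ ‖φ α - ComplexEmbedding.conjugate φ α‖ ^ 2 :=
          abs_discr_le_norm_sub_sq hK (IsTotallyComplex.conjugate_ne_self φ).symm
            α.isIntegral_coe hαQ
      _ ≤ (‖φ α‖ + ‖φ α‖) ^ 2 := by
          gcongr
          simpa [ComplexEmbedding.conjugate_coe_eq] using norm_sub_le (φ α) (starRingEnd ℂ (φ α))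
      _ = 4 * ‖φ α‖ ^ 2 := by ring
  rw [intHeight_eq_max_one_norm hK φ, max_eq_right (by nlinarith [norm_nonneg (φ α)]),
    minkowskiConst, nrComplexPlaces_eq_one hK, hK]
  norm_num
  exact sqrt_two_div_pi_mul_rpow_lt (abs_nonneg _) hdiscr ht (norm_nonneg _)

/-- If $L=\mathbb{Q}(\sqrt m)$ is imaginary quadratic with torsion subgroup of
$L^\times$ equal to $\{\pm 1\}$, then $c_L < \min\{H(\alpha)\}$ over integral
generators $\alpha$ of $L$. -/
theorem statement2 (m : ℤ) (hsf : Squarefree m) (hneg : m < 0)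
    (L : Type*) [Field L] [NumberField L] (r : L) (hr : r ^ 2 = (m : L))
    (hgenL : IntermediateField.adjoin ℚ {r} = ⊤)
    (htor : ∀ x : L, (∃ n : ℕ, 0 < n ∧ x ^ n = 1) → x = 1 ∨ x = -1) :
    ∀ α : 𝓞 L, IntermediateField.adjoin ℚ {(α : L)} = ⊤ →
      minkowskiConst L < intHeight (α : L) :=
  statement2_general m hneg L r hr hgenL htor
end

section
/- Let K be a number field with at least two archimedean places, let w be an archimedean place of K, and for each archimedean place v ≠ w let 0 < B_v ≤ 1. Then there exists a nonzero algebraic integer ξ ∈ O_K such that |ξ|_v < B_v for all archimedean v ≠ w, |ξ|_w ≤ c_K ∏_{v|∞, v≠w} B_v^{-1}, and H(ξ) = |ξ|_w. -/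
open NumberField

/-! Measured by the normalized absolute values `|·|_v`, Minkowski's theorem for the box
`{|x|_v < b_v for all v}` yields a nonzero integer in it as soon as `∏_v b_v > c_K`: the constant
`c_K` is the `d`-th root of Minkowski's bound for `𝓞 K`, rescaled to the normalized absolute values.
Taking `b_v = B_v` for `v ≠ w` and `b_w = c_K ∏ B_v⁻¹ + ε`, the integers obtained for `ε ≤ 1` lie
in a finite set, so one of them works for `ε = 0`. Since `|ξ|_v < 1` for `v ≠ w` and
`|N(ξ)| ≥ 1`, the place `w` is the only one contributing to the height of `ξ`. -/

open NumberField.InfinitePlace NumberField.mixedEmbedding Module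

section

variable {K : Type*} [Field K] [NumberField K]

theorem minkowskiConst_pos : 0 < minkowskiConst K := by
  have hΔ : (0 : ℝ) < |(discr K : ℝ)| := abs_pos.mpr (Int.cast_ne_zero.mpr (discr_ne_zero K))
  unfold minkowskiConst
  positivity

theorem minkowskiConst_pow_finrank :
    minkowskiConst K ^ finrank ℚ K = (2 / Real.pi) ^ nrComplexPlaces K * √|(discr K : ℝ)| := by
  have hd : (finrank ℚ K : ℝ) ≠ 0 := Nat.cast_ne_zero.mpr finrank_pos.ne'
  rw [minkowskiConst, mul_pow, ← Real.rpow_natCast, ← Real.rpow_mul (by positivity),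
    ← Real.rpow_natCast, ← Real.rpow_mul (abs_nonneg _), div_mul_cancel₀ _ hd,
    Real.rpow_natCast, Real.sqrt_eq_rpow]
  congr 2
  field_simp

theorem minkowskiBound_one_toReal :
    (minkowskiBound K 1).toReal =
      (2 ^ nrRealPlaces K * Real.pi ^ nrComplexPlaces K) * minkowskiConst K ^ finrank ℚ K := by
  rw [minkowskiBound, volume_fundamentalDomain_fractionalIdealLatticeBasis,
    volume_fundamentalDomain_latticeBasis, mixedEmbedding.finrank, Units.val_one,
    FractionalIdeal.absNorm_one, Rat.cast_one, ENNReal.ofReal_one, one_mul]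
  simp only [ENNReal.toReal_mul, ENNReal.toReal_pow, ENNReal.toReal_inv, ENNReal.toReal_ofNat,
    ENNReal.coe_toReal, Real.coe_sqrt, coe_nnnorm, Int.norm_eq_abs]
  rw [minkowskiConst_pow_finrank, ← card_add_two_mul_card_eq_rank, div_pow]
  field_simp
  rw [one_div, inv_pow, pow_add, pow_mul']
  field_simp

theorem exists_ne_zero_forall_lt_of_minkowskiConst_pow_lt (g : InfinitePlace K → NNReal)
    (hg : minkowskiConst K ^ finrank ℚ K < ∏ v, (g v : ℝ) ^ mult v) :
    ∃ a : 𝓞 K, a ≠ 0 ∧ ∀ v : InfinitePlace K, v (a : K) < g v := by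
  refine exists_ne_zero_mem_ringOfIntegers_lt K ?_
  rw [convexBodyLT_volume, ← ENNReal.coe_mul,
    ← ENNReal.toReal_lt_toReal (minkowskiBound_lt_top K 1).ne ENNReal.coe_ne_top,
    minkowskiBound_one_toReal, ENNReal.coe_toReal]
  push_cast [convexBodyLTFactor, NNReal.coe_real_pi]
  exact mul_lt_mul_of_pos_left hg (by positivity)

theorem placeNorm_eq_rpow_inv (v : InfinitePlace K) (x : K) :
    placeNorm v x = v x ^ ((finrank ℚ K : ℝ) / mult v)⁻¹ := by
  rw [placeNorm, inv_div]

theorem finrank_div_mult_pos (v : InfinitePlace K) : 0 < (finrank ℚ K : ℝ) / mult v := by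
  have : 0 < finrank ℚ K := finrank_pos
  have := mult_pos (w := v)
  positivity

theorem placeNorm_lt_iff {v : InfinitePlace K} {x : K} {b : ℝ} (hb : 0 ≤ b) :
    placeNorm v x < b ↔ v x < b ^ ((finrank ℚ K : ℝ) / mult v) := by
  rw [placeNorm_eq_rpow_inv]
  exact Real.rpow_inv_lt_iff_of_pos (apply_nonneg v x) hb (finrank_div_mult_pos v)

theorem placeNorm_le_iff {v : InfinitePlace K} {x : K} {b : ℝ} (hb : 0 ≤ b) :
    placeNorm v x ≤ b ↔ v x ≤ b ^ ((finrank ℚ K : ℝ) / mult v) := by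
  rw [placeNorm_eq_rpow_inv]
  exact Real.rpow_inv_le_iff_of_pos (apply_nonneg v x) hb (finrank_div_mult_pos v)

theorem rpow_finrank_div_mult_pow_mult {b : ℝ} (hb : 0 ≤ b) (v : InfinitePlace K) :
    (b ^ ((finrank ℚ K : ℝ) / mult v)) ^ mult v = b ^ finrank ℚ K := by
  rw [← Real.rpow_natCast, ← Real.rpow_mul hb,
    div_mul_cancel₀ _ (Nat.cast_ne_zero.mpr mult_ne_zero), Real.rpow_natCast]

theorem exists_ne_zero_forall_placeNorm_lt (b : InfinitePlace K → ℝ) (hb : ∀ v, 0 ≤ b v)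
    (h : minkowskiConst K < ∏ v, b v) :
    ∃ a : 𝓞 K, a ≠ 0 ∧ ∀ v : InfinitePlace K, placeNorm v (a : K) < b v := by
  have hg : minkowskiConst K ^ finrank ℚ K <
      ∏ v, (b v ^ ((finrank ℚ K : ℝ) / mult v)) ^ mult v := by
    simp_rw [rpow_finrank_div_mult_pow_mult (hb _)]
    rw [Finset.prod_pow]
    exact pow_lt_pow_left₀ h minkowskiConst_pos.le finrank_pos.ne'
  obtain ⟨a, ha, hlt⟩ := exists_ne_zero_forall_lt_of_minkowskiConst_pow_lt
    (fun v ↦ ⟨_, Real.rpow_nonneg (hb v) _⟩) hg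
  exact ⟨a, ha, fun v ↦ (placeNorm_lt_iff (hb v)).mpr (hlt v)⟩

theorem finite_setOf_forall_placeNorm_le (r : InfinitePlace K → ℝ) (hr : ∀ v, 0 ≤ r v) :
    {a : 𝓞 K | ∀ v, placeNorm v (a : K) ≤ r v}.Finite := by
  obtain ⟨R, hR⟩ := (Set.finite_range fun v ↦ r v ^ ((finrank ℚ K : ℝ) / mult v)).bddAbove
  refine ((Embeddings.finite_of_norm_le K ℂ R).preimage
    RingOfIntegers.coe_injective.injOn).subset fun a ha ↦ ⟨a.isIntegral_coe, fun φ ↦ ?_⟩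
  rw [← InfinitePlace.apply]
  exact ((placeNorm_le_iff (hr _)).mp (ha _)).trans (hR ⟨_, rfl⟩)

theorem exists_ne_zero_placeNorm_le (w : InfinitePlace K) (b : InfinitePlace K → ℝ)
    (hb : ∀ v, 0 < b v) (h : minkowskiConst K ≤ ∏ v, b v) :
    ∃ a : 𝓞 K, a ≠ 0 ∧ (∀ v, v ≠ w → placeNorm v (a : K) < b v) ∧ placeNorm w (a : K) ≤ b w := by
  classical
  have approx : ∀ ε > 0, ∃ a : 𝓞 K, a ≠ 0 ∧ (∀ v, v ≠ w → placeNorm v (a : K) < b v) ∧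
      placeNorm w (a : K) < b w + ε := by
    intro ε hε
    have hprod : ∏ v, b v < ∏ v, Function.update b w (b w + ε) v := by
      rw [Finset.prod_update_of_mem (Finset.mem_univ w), ← Finset.mul_prod_erase _ _
        (Finset.mem_univ w), Finset.sdiff_singleton_eq_erase]
      exact mul_lt_mul_of_pos_right (by linarith) (Finset.prod_pos fun v _ ↦ hb v)
    obtain ⟨a, ha, hlt⟩ := exists_ne_zero_forall_placeNorm_lt _
      (fun v ↦ by simp only [Function.update_apply]; split_ifs <;> linarith [hb v, hb w])
      (h.trans_lt hprod)
    refine ⟨a, ha, fun v hv ↦ ?_, ?_⟩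
    · simpa [hv] using hlt v
    · simpa using hlt w
  let S := {a : 𝓞 K | a ≠ 0 ∧ (∀ v, v ≠ w → placeNorm v (a : K) < b v) ∧
    placeNorm w (a : K) < b w + 1}
  have hS : S.Finite := by
    refine (finite_setOf_forall_placeNorm_le (fun v ↦ b v + 1)
      fun v ↦ by linarith [hb v]).subset fun a ⟨_, hlt, hw⟩ v ↦ ?_
    rcases eq_or_ne v w with rfl | hv
    · exact hw.le
    · linarith [hlt v hv]
  obtain ⟨a, ⟨ha, hlt, -⟩, hmin⟩ := S.exists_min_image (fun a ↦ placeNorm w (a : K)) hS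
    (let ⟨a, ha⟩ := approx 1 one_pos; ⟨a, ha⟩)
  refine ⟨a, ha, hlt, le_of_forall_pos_lt_add fun ε hε ↦ ?_⟩
  obtain ⟨a', ha', hlt', hw'⟩ := approx (min ε 1) (lt_min hε one_pos)
  calc placeNorm w (a : K) ≤ placeNorm w (a' : K) :=
        hmin a' ⟨ha', hlt', hw'.trans_le (by gcongr; exact min_le_right _ _)⟩
    _ < b w + min ε 1 := hw'
    _ ≤ b w + ε := by gcongr; exact min_le_left _ _

theorem prod_max_one_norm_eq_prod_max_one_pow_mult (x : K) :
    ∏ φ : K →+* ℂ, max 1 ‖φ x‖ = ∏ v : InfinitePlace K, max 1 (v x) ^ mult v := by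
  classical
  rw [← Finset.prod_fiberwise Finset.univ InfinitePlace.mk]
  refine Finset.prod_congr rfl fun v _ ↦ ?_
  rw [Finset.prod_congr rfl (g := fun _ ↦ max 1 (v x)) fun φ hφ ↦ ?_, Finset.prod_const,
    card_filter_mk_eq]
  rw [← (Finset.mem_filter.mp hφ).2, InfinitePlace.apply]

theorem intHeight_eq_placeNorm_of_lt_one {w : InfinitePlace K} {a : 𝓞 K} (ha : a ≠ 0)
    (h : ∀ v, v ≠ w → v (a : K) < 1) : intHeight (a : K) = placeNorm w (a : K) := by
  classical
  have hw : 1 ≤ w (a : K) := one_le_of_lt_one ha h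
  have hprod : ∏ v : InfinitePlace K, max 1 (v (a : K)) ^ mult v = w (a : K) ^ mult w := by
    rw [← Finset.mul_prod_erase _ _ (Finset.mem_univ w), max_eq_right hw,
      Finset.prod_eq_one fun v hv ↦ by rw [max_eq_left (h v (Finset.ne_of_mem_erase hv)).le,
        one_pow], mul_one]
  rw [intHeight, prod_max_one_norm_eq_prod_max_one_pow_mult, hprod, placeNorm, div_eq_mul_inv,
    Real.rpow_mul (apply_nonneg w _), Real.rpow_natCast]

end

theorem statement4_general (K : Type*) [Field K] [NumberField K] [DecidableEq (InfinitePlace K)]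
    (w : InfinitePlace K) (B : InfinitePlace K → ℝ)
    (hB : ∀ v : InfinitePlace K, v ≠ w → 0 < B v ∧ B v ≤ 1) :
    ∃ ξ : 𝓞 K, ξ ≠ 0 ∧
      (∀ v : InfinitePlace K, v ≠ w → placeNorm v (ξ : K) < B v) ∧
      placeNorm w (ξ : K) ≤ minkowskiConst K * ∏ v ∈ Finset.univ.erase (α := InfinitePlace K) w, (B v)⁻¹ ∧
      intHeight (ξ : K) = placeNorm w (ξ : K) := by
  set T := minkowskiConst K * ∏ v ∈ Finset.univ.erase w, (B v)⁻¹
  have hT : 0 < T := mul_pos minkowskiConst_pos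
    (Finset.prod_pos fun v hv ↦ inv_pos.mpr (hB v (Finset.ne_of_mem_erase hv)).1)
  have hprod : ∏ v, Function.update B w T v = minkowskiConst K := by
    rw [Finset.prod_update_of_mem (Finset.mem_univ w), Finset.sdiff_singleton_eq_erase, mul_assoc,
      ← Finset.prod_mul_distrib, Finset.prod_eq_one fun v hv ↦
        inv_mul_cancel₀ (hB v (Finset.ne_of_mem_erase hv)).1.ne', mul_one]
  obtain ⟨ξ, hξ, hlt, hle⟩ := exists_ne_zero_placeNorm_le w (Function.update B w T)
    (fun v ↦ by
      rcases eq_or_ne v w with rfl | hv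
      · simpa using hT
      · simpa [hv] using (hB v hv).1) hprod.ge
  have hlt_B : ∀ v, v ≠ w → placeNorm v (ξ : K) < B v := fun v hv ↦ by simpa [hv] using hlt v hv
  refine ⟨ξ, hξ, hlt_B, by simpa using hle, intHeight_eq_placeNorm_of_lt_one hξ fun v hv ↦ ?_⟩
  simpa using (placeNorm_lt_iff zero_le_one).mp ((hlt_B v hv).trans_le (hB v hv).2)

/-- Lemma 2.1: given an archimedean place $w$ of $K$ (with at least two archimedean
places) and bounds $0<B_v\le 1$ at the other archimedean places, there is a nonzero
$\xi\in O_K$ with $|\xi|_v<B_v$ for $v\ne w$, $|\xi|_w\le c_K\prod B_v^{-1}$, and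
$H(\xi)=|\xi|_w$. -/
theorem statement4 (K : Type*) [Field K] [NumberField K] [DecidableEq (InfinitePlace K)]
    (hcard : 2 ≤ Fintype.card (InfinitePlace K))
    (w : InfinitePlace K) (B : InfinitePlace K → ℝ)
    (hB : ∀ v : InfinitePlace K, v ≠ w → 0 < B v ∧ B v ≤ 1) :
    ∃ ξ : 𝓞 K, ξ ≠ 0 ∧
      (∀ v : InfinitePlace K, v ≠ w → placeNorm v (ξ : K) < B v) ∧
      placeNorm w (ξ : K) ≤ minkowskiConst K * ∏ v ∈ Finset.univ.erase (α := InfinitePlace K) w, (B v)⁻¹ ∧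
      intHeight (ξ : K) = placeNorm w (ξ : K) :=
  statement4_general K w B hB
end

section
/- Let K be a totally complex number field with at least two archimedean places, let w be an archimedean place, and let ξ be a nonzero element of O_K with |ξ|_v < 1 for all archimedean places v ≠ w. If k = Q(ξ) is a proper subfield of K, then [K : k] = 2. -/
/-!
Since `ξ` is a nonzero algebraic integer, the product formula forces `|ξ|_w ≥ 1`, while
`|ξ|_v < 1` at every other archimedean place `v`. As `ξ ∈ k`, the value `|ξ|_v` only depends on
the restriction of `v` to `k`, so `w` is the only place of `K` above its restriction `u` to `k`.
The degree `[K : k]` is the number of unramified places above `u` plus twice the number of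
ramified ones, hence it is at most `2`, and it is not `1` because `k ≠ K`.
-/

open NumberField

namespace NumberField.InfinitePlace

variable {K L : Type*} [Field K] [Field L] [Algebra K L]

theorem finrank_le_two_of_placesOver_subsingleton [NumberField K] [NumberField L]
    (v : InfinitePlace K) (h : (placesOver L v).Subsingleton) : Module.finrank K L ≤ 2 := by
  have hcard : (ramifiedPlacesOver L v).ncard + (unramifiedPlacesOver L v).ncard ≤ 1 := by
    rw [← Set.ncard_union_eq (disjoint_ramifiedPlacesOver_unramifiedPlacesOver L v),
      union_ramifiedPlacesOver_unramifiedPlacesOver]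
    exact (Set.ncard_le_one_iff (Set.toFinite _)).mpr fun ha hb ↦ h ha hb
  have := unramifedPlacesOver_ncard_add_eq_finrank L v
  omega

theorem placesOver_comap_subsingleton_of_forall_ne_lt_one [NumberField L] {w : InfinitePlace L}
    {ξ : 𝓞 L} (hξ : ξ ≠ 0) (hmem : (ξ : L) ∈ (algebraMap K L).range)
    (hsmall : ∀ v ≠ w, v (ξ : L) < 1) :
    (placesOver L (w.comap (algebraMap K L))).Subsingleton := by
  suffices ∀ v ∈ placesOver L (w.comap (algebraMap K L)), v = w from
    fun a ha b hb ↦ (this a ha).trans (this b hb).symm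
  intro v hv
  have : v.LiesOver (w.comap (algebraMap K L)) := hv
  obtain ⟨x, hx⟩ := hmem
  by_contra hne
  have hvw : v (ξ : L) = w (ξ : L) := by
    rw [← hx, ← comap_apply, ← comap_apply, LiesOver.comap_eq v (w.comap (algebraMap K L))]
  linarith [one_le_of_lt_one hξ hsmall, hsmall v hne]

end NumberField.InfinitePlace

theorem placeNorm_lt_one_iff {K : Type*} [Field K] [NumberField K] (v : InfinitePlace K) (x : K) :
    placeNorm v x < 1 ↔ v x < 1 :=
  Real.rpow_lt_one_iff' (apply_nonneg v x)
    (div_pos (mod_cast v.mult_pos) (mod_cast Module.finrank_pos))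

theorem statement5_general (K : Type*) [Field K] [NumberField K]
    (w : InfinitePlace K) (ξ : 𝓞 K) (hξ : ξ ≠ 0)
    (hsmall : ∀ v : InfinitePlace K, v ≠ w → placeNorm v (ξ : K) < 1)
    (hproper : IntermediateField.adjoin ℚ {(ξ : K)} ≠ ⊤) :
    Module.finrank (↥(IntermediateField.adjoin ℚ {(ξ : K)})) K = 2 := by
  set k := IntermediateField.adjoin ℚ {(ξ : K)}
  have hle : Module.finrank k K ≤ 2 :=
    InfinitePlace.finrank_le_two_of_placesOver_subsingleton _ <|
      InfinitePlace.placesOver_comap_subsingleton_of_forall_ne_lt_one hξ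
        ⟨⟨ξ, IntermediateField.mem_adjoin_simple_self ℚ (ξ : K)⟩, rfl⟩
        fun v hv ↦ (placeNorm_lt_one_iff v _).mp (hsmall v hv)
  have hne : Module.finrank k K ≠ 1 := IntermediateField.finrank_eq_one_iff_eq_top.not.mpr hproper
  have hpos : 0 < Module.finrank k K := Module.finrank_pos
  omega

/-- Lemma 2.2, first part: if $K$ is totally complex with at least two archimedean
places, $\xi\in O_K\setminus\{0\}$ with $|\xi|_v<1$ for all archimedean $v\ne w$, and
$k=\mathbb{Q}(\xi)$ is a proper subfield of $K$, then $[K:k]=2$. -/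
theorem statement5 (K : Type*) [Field K] [NumberField K]
    (htc : ∀ v : InfinitePlace K, v.IsComplex)
    (hcard : 2 ≤ Fintype.card (InfinitePlace K))
    (w : InfinitePlace K) (ξ : 𝓞 K) (hξ : ξ ≠ 0)
    (hsmall : ∀ v : InfinitePlace K, v ≠ w → placeNorm v (ξ : K) < 1)
    (hproper : IntermediateField.adjoin ℚ {(ξ : K)} ≠ ⊤) :
    Module.finrank (↥(IntermediateField.adjoin ℚ {(ξ : K)})) K = 2 :=
  statement5_general K w ξ hξ hsmall hproper
end

section
/- Let K be a totally complex number field with at least two archimedean places, let w be an archimedean place with associated embedding σ_w : K → C, and let ξ be a nonzero element of O_K with |ξ|_v < 1 for all archimedean places v ≠ w. If k = Q(ξ) is a proper subfield of K, then σ_w(k) ⊆ R and σ_w(k) = σ_w(K) ∩ R. -/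
open NumberField

/-!
Since `ξ` is a nonzero algebraic integer with `v ξ < 1` for all `v ≠ w`, the product formula for
its norm gives `w ξ ≥ 1`. Hence every embedding `τ : K → ℂ` agreeing with `σ_w` on `k = ℚ(ξ)`
induces the place `w`, i.e. `τ ∈ {σ_w, conj ∘ σ_w}`. So `[K : k] ≤ 2`, while `[K : k] ≥ 2` as `k`
is proper: thus `conj ∘ σ_w` also extends `σ_w|_k`, and `σ_w(k) ⊆ ℝ`. Then `k` lies in
`E = σ_w⁻¹(ℝ)`, which is proper since `w` is complex, and `[K : k] ≤ 2 ≤ [K : E]` forces `k = E`.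
-/

theorem IntermediateField.two_le_finrank_of_ne_top {F L : Type*} [Field F] [Field L]
    [Algebra F L] [FiniteDimensional F L] {E : IntermediateField F L} (hE : E ≠ ⊤) :
    2 ≤ Module.finrank E L := by
  have := Module.finrank_pos (R := E) (M := L)
  have := mt IntermediateField.finrank_eq_one_iff_eq_top.mp hE
  omega

theorem IntermediateField.finrank_le_card_of_eqOn {K Ω : Type*} [Field K] [NumberField K]
    [Field Ω] [IsAlgClosed Ω] (F : IntermediateField ℚ K) (φ : K →+* Ω)
    (s : Finset (K →+* Ω)) (h : ∀ τ : K →+* Ω, Set.EqOn τ φ F → τ ∈ s) :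
    Module.finrank F K ≤ s.card := by
  let : Algebra F Ω := (φ.comp (algebraMap F K)).toAlgebra
  rw [← AlgHom.card F K Ω, ← Finset.card_univ]
  refine Finset.card_le_card_of_injOn (fun τ => (τ : K →+* Ω)) (fun τ _ => h τ ?_)
    (fun τ₁ _ τ₂ _ h₁₂ => AlgHom.ext (RingHom.congr_fun h₁₂))
  intro x hx
  exact τ.commutes ⟨x, hx⟩

namespace NumberField.ComplexEmbedding

variable {K : Type*} [Field K] [CharZero K]

noncomputable def realSubfield (φ : K →+* ℂ) : IntermediateField ℚ K :=
  (Subfield.comap φ Complex.ofRealHom.fieldRange).toIntermediateField fun q => by simp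

theorem mem_realSubfield {φ : K →+* ℂ} {x : K} : x ∈ realSubfield φ ↔ (φ x).im = 0 := by
  change (∃ r : ℝ, (r : ℂ) = φ x) ↔ _
  refine ⟨fun ⟨r, hr⟩ => hr ▸ Complex.ofReal_im r, fun h => ⟨(φ x).re, ?_⟩⟩
  exact Complex.ext rfl h.symm

theorem realSubfield_eq_top_iff {φ : K →+* ℂ} : realSubfield φ = ⊤ ↔ IsReal φ := by
  rw [isReal_iff, eq_top_iff]
  refine ⟨fun h => RingHom.ext fun x => ?_, fun h x _ => ?_⟩
  · exact Complex.conj_eq_iff_im.mpr (mem_realSubfield.mp (h trivial))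
  · exact mem_realSubfield.mpr (Complex.conj_eq_iff_im.mp (RingHom.congr_fun h x))

theorem image_realSubfield (φ : K →+* ℂ) :
    φ '' realSubfield φ = Set.range φ ∩ {z : ℂ | z.im = 0} := by
  ext z
  constructor
  · rintro ⟨x, hx, rfl⟩
    exact ⟨⟨x, rfl⟩, mem_realSubfield.mp hx⟩
  · rintro ⟨⟨x, rfl⟩, hx⟩
    exact ⟨x, mem_realSubfield.mpr hx, rfl⟩

end NumberField.ComplexEmbedding

namespace NumberField.InfinitePlace

open ComplexEmbedding

variable {K : Type*} [Field K] {w : InfinitePlace K} {x : K}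

theorem mk_eq_of_apply_eq_embedding (hx : ∀ v ≠ w, v x < w x) {τ : K →+* ℂ} (hτ : τ x = w.embedding x) :
    mk τ = w := by
  by_contra h
  have := hx _ h
  rw [apply, hτ, norm_embedding_eq] at this
  exact lt_irrefl _ this

theorem eq_embedding_or_conjugate_of_apply_eq (hx : ∀ v ≠ w, v x < w x) {τ : K →+* ℂ} (hτ : τ x = w.embedding x) :
    τ = w.embedding ∨ τ = conjugate w.embedding := by
  have := mk_eq_of_apply_eq_embedding hx hτ
  rw [← mk_embedding w, mk_eq_iff] at this
  rcases this with h | h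
  · exact Or.inl h
  · exact Or.inr (h ▸ (star_star τ).symm)

variable [NumberField K] {F : IntermediateField ℚ K}

theorem lt_one_of_placeNorm_lt_one {v : InfinitePlace K} (h : placeNorm v x < 1) : v x < 1 := by
  contrapose! h
  exact Real.one_le_rpow h (by positivity)

theorem finrank_le_two_of_mem (hx : ∀ v ≠ w, v x < w x) (hxF : x ∈ F) :
    Module.finrank F K ≤ 2 := by
  classical
  refine (F.finrank_le_card_of_eqOn w.embedding {w.embedding, conjugate w.embedding}
    fun τ hτ => ?_).trans Finset.card_le_two
  rcases eq_embedding_or_conjugate_of_apply_eq hx (hτ hxF) with rfl | rfl <;> simp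

theorem le_realSubfield_of_mem (hx : ∀ v ≠ w, v x < w x) (hxF : x ∈ F) (hF : F ≠ ⊤) :
    F ≤ realSubfield w.embedding := by
  intro y hyF
  rw [mem_realSubfield]
  by_contra hy
  have hle : Module.finrank F K ≤ ({w.embedding} : Finset (K →+* ℂ)).card := by
    refine F.finrank_le_card_of_eqOn w.embedding _ fun τ hτ => ?_
    rcases eq_embedding_or_conjugate_of_apply_eq hx (hτ hxF) with rfl | rfl
    · exact Finset.mem_singleton_self _
    · exact absurd (Complex.conj_eq_iff_im.mp (hτ hyF)) hy
  have := IntermediateField.two_le_finrank_of_ne_top hF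
  rw [Finset.card_singleton] at hle
  omega

theorem eq_realSubfield_of_mem (hw : w.IsComplex) (hx : ∀ v ≠ w, v x < w x) (hxF : x ∈ F)
    (hF : F ≠ ⊤) : F = realSubfield w.embedding := by
  have hreal : realSubfield w.embedding ≠ ⊤ := by
    rwa [Ne, realSubfield_eq_top_iff, ← isComplex_iff]
  refine IntermediateField.eq_of_le_of_finrank_le' (le_realSubfield_of_mem hx hxF hF) ?_
  exact (finrank_le_two_of_mem hx hxF).trans (IntermediateField.two_le_finrank_of_ne_top hreal)

end NumberField.InfinitePlace

theorem statement6_general (K : Type*) [Field K] [NumberField K]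
    (htc : ∀ v : InfinitePlace K, v.IsComplex)
    (w : InfinitePlace K) (ξ : 𝓞 K) (hξ : ξ ≠ 0)
    (hsmall : ∀ v : InfinitePlace K, v ≠ w → placeNorm v (ξ : K) < 1)
    (hproper : IntermediateField.adjoin ℚ {(ξ : K)} ≠ ⊤) :
    (w.embedding '' (IntermediateField.adjoin ℚ {(ξ : K)} : Set K) ⊆ {z : ℂ | z.im = 0}) ∧
    w.embedding '' (IntermediateField.adjoin ℚ {(ξ : K)} : Set K) =
      Set.range w.embedding ∩ {z : ℂ | z.im = 0} := by
  have hlt : ∀ v ≠ w, v (ξ : K) < 1 :=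
    fun v hv => InfinitePlace.lt_one_of_placeNorm_lt_one (hsmall v hv)
  have hdom : ∀ v ≠ w, v (ξ : K) < w ξ :=
    fun v hv => (hlt v hv).trans_le (InfinitePlace.one_le_of_lt_one hξ fun v hv => hlt v hv)
  rw [InfinitePlace.eq_realSubfield_of_mem (htc w) hdom
    (IntermediateField.mem_adjoin_simple_self ℚ _) hproper, ComplexEmbedding.image_realSubfield]
  exact ⟨Set.inter_subset_right, rfl⟩

/-- Lemma 2.2, second part: with $K, w, \xi$ as before and $k=\mathbb{Q}(\xi)$ proper,
$\sigma_w(k)\subseteq\mathbb{R}$ and $\sigma_w(k)=\sigma_w(K)\cap\mathbb{R}$. -/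
theorem statement6 (K : Type*) [Field K] [NumberField K]
    (htc : ∀ v : InfinitePlace K, v.IsComplex)
    (hcard : 2 ≤ Fintype.card (InfinitePlace K))
    (w : InfinitePlace K) (ξ : 𝓞 K) (hξ : ξ ≠ 0)
    (hsmall : ∀ v : InfinitePlace K, v ≠ w → placeNorm v (ξ : K) < 1)
    (hproper : IntermediateField.adjoin ℚ {(ξ : K)} ≠ ⊤) :
    (w.embedding '' (IntermediateField.adjoin ℚ {(ξ : K)} : Set K) ⊆ {z : ℂ | z.im = 0}) ∧
    w.embedding '' (IntermediateField.adjoin ℚ {(ξ : K)} : Set K) =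
      Set.range w.embedding ∩ {z : ℂ | z.im = 0} :=
  statement6_general K htc w ξ hξ hsmall hproper
end

section
/- Let K be a number field and μ an algebraic integer in O_K that is not totally real. Then there exists an algebraic integer α ∈ O_K such that K = Q(α) and H(α) ≤ H(μ) · c_K, where c_K = (2/π)^{s/d}|Δ_K|^{1/(2d)}. -/
open NumberField

/-!
Choose a complex place `w₀` at which `μ` is not real and weights `m_w = max(1, |μ|_w)`, so that
`H(μ)^d = ∏_w m_w^{d_w}`. Minkowski's theorem, for the box closed in the `w₀`-coordinate (which
follows from the open version because only finitely many integers have bounded conjugates),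
gives `a ≠ 0` in `O_K` with `|a|_w m_w < 1` for `w ≠ w₀` and
`(|a|_{w₀} m_{w₀})^2 ≤ c_K^d H(μ)^d`, the constant `c_K^d = (2/π)^s |Δ_K|^{1/2}` being the
Minkowski bound divided by the volume factor. If `a` is not real at `w₀` take `α = a`, otherwise
`α = aμ`, which is not real at `w₀` because `μ` is not. In both cases `α` is smaller than `1` at
every place but `w₀` and not real at `w₀`, so it generates `K`, and the product formula gives
`H(α)^d = |α|_{w₀}^2 ≤ (|a|_{w₀} m_{w₀})^2`.
-/

open NumberField.InfinitePlace Module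
open scoped NNReal ENNReal IntermediateField

namespace NumberField

variable {K : Type*} [Field K]

theorem isComplex_of_im_embedding_ne_zero {w : InfinitePlace K} {x : K}
    (h : (embedding w x).im ≠ 0) : IsComplex w := by
  rw [← not_isReal_iff_isComplex, isReal_iff]
  intro hw
  rw [← hw.coe_embedding_apply] at h
  exact h (Complex.ofReal_im _)

theorem im_embedding_mk_ne_zero {φ : K →+* ℂ} {x : K} (h : (φ x).im ≠ 0) :
    ((InfinitePlace.mk φ).embedding x).im ≠ 0 := by
  rcases embedding_mk_eq φ with hφ | hφ
  · rwa [hφ]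
  · rwa [hφ, ComplexEmbedding.conjugate_coe_eq, Complex.conj_im, neg_ne_zero]

theorem exists_ne_zero_lt_one_and_im_ne_zero {a μ : 𝓞 K} {w₀ : InfinitePlace K} (ha : a ≠ 0)
    (hlt : ∀ w ≠ w₀, w a * max 1 (w μ) < 1) (hμ : (embedding w₀ μ).im ≠ 0) :
    ∃ α : 𝓞 K, α ≠ 0 ∧ (∀ w ≠ w₀, w α < 1) ∧ (embedding w₀ α).im ≠ 0 ∧
      w₀ α ≤ w₀ a * max 1 (w₀ μ) := by
  have hself (w : InfinitePlace K) : w a ≤ w a * max 1 (w μ) :=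
    le_mul_of_one_le_right (apply_nonneg _ _) (le_max_left _ _)
  have hmul (w : InfinitePlace K) : w (a * μ : 𝓞 K) ≤ w a * max 1 (w μ) := by
    push_cast
    rw [map_mul]
    exact mul_le_mul_of_nonneg_left (le_max_right _ _) (apply_nonneg _ _)
  by_cases ha_im : (embedding w₀ a).im = 0
  · have hμ0 : μ ≠ 0 := by
      rintro rfl
      simp at hμ
    have ha_re : (embedding w₀ a).re ≠ 0 := fun h =>
      RingOfIntegers.coe_ne_zero_iff.mpr ha ((map_eq_zero _).mp (Complex.ext h ha_im))
    refine ⟨a * μ, mul_ne_zero ha hμ0, fun w hw => (hmul w).trans_lt (hlt w hw), ?_, hmul w₀⟩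
    push_cast
    rw [map_mul, Complex.mul_im, ha_im, zero_mul, add_zero]
    exact mul_ne_zero ha_re hμ
  · exact ⟨a, ha, fun w hw => (hself w).trans_lt (hlt w hw), ha_im, hself w₀⟩

variable [NumberField K]

theorem prod_max_one_norm_embeddings (x : K) :
    ∏ φ : K →+* ℂ, max 1 ‖φ x‖ = ∏ w : InfinitePlace K, max 1 (w x) ^ mult w := by
  classical
  rw [← Finset.prod_fiberwise Finset.univ InfinitePlace.mk fun φ : K →+* ℂ => max 1 ‖φ x‖]
  refine Finset.prod_congr rfl fun w _ => ?_
  have h (φ : K →+* ℂ) (hφ : φ ∈ ({φ | InfinitePlace.mk φ = w} : Finset _)) :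
      max 1 ‖φ x‖ = max 1 (w x) := by
    rw [← (Finset.mem_filter.mp hφ).2, InfinitePlace.apply]
  rw [Finset.prod_congr rfl h, Finset.prod_const, card_filter_mk_eq]

theorem intHeight_nonneg (x : K) : 0 ≤ intHeight x :=
  Real.rpow_nonneg (Finset.prod_nonneg fun _ _ => zero_le_one.trans (le_max_left _ _)) _

theorem intHeight_pow_finrank (x : K) :
    intHeight x ^ finrank ℚ K = ∏ w : InfinitePlace K, max 1 (w x) ^ mult w := by
  rw [intHeight, ← Real.rpow_natCast, ← Real.rpow_mul
    (Finset.prod_nonneg fun _ _ => zero_le_one.trans (le_max_left _ _)),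
    inv_mul_cancel₀ (Nat.cast_ne_zero.mpr finrank_pos.ne'), Real.rpow_one,
    prod_max_one_norm_embeddings]

theorem intHeight_pow_finrank_of_lt_one {x : K} {w₀ : InfinitePlace K}
    (hx : ∀ w ≠ w₀, w x < 1) : intHeight x ^ finrank ℚ K = max 1 (w₀ x) ^ mult w₀ := by
  rw [intHeight_pow_finrank, Fintype.prod_eq_single w₀ fun w hw => ?_]
  rw [max_eq_left (hx w hw).le, one_pow]

theorem minkowskiConst_nonneg : 0 ≤ minkowskiConst K := by
  unfold minkowskiConst
  positivity

theorem minkowskiConst_pow_finrank :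
    minkowskiConst K ^ finrank ℚ K = (2 / Real.pi) ^ nrComplexPlaces K * √|(discr K : ℝ)| := by
  have hd : (finrank ℚ K : ℝ) ≠ 0 := Nat.cast_ne_zero.mpr finrank_pos.ne'
  rw [minkowskiConst, mul_pow, ← Real.rpow_natCast, ← Real.rpow_natCast,
    ← Real.rpow_mul (by positivity), ← Real.rpow_mul (abs_nonneg _), div_mul_cancel₀ _ hd,
    Real.sqrt_eq_rpow, Real.rpow_natCast]
  congr 2
  field_simp

theorem adjoin_eq_top_of_lt_of_im_embedding_ne_zero {x : K} {w : InfinitePlace K}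
    (hlt : ∀ w' ≠ w, w' x < w x) (him : (embedding w x).im ≠ 0) : ℚ⟮x⟯ = ⊤ := by
  rw [Field.primitive_element_iff_algHom_eq_of_eval ℚ ℂ
    (fun _ => IsAlgClosed.splits _) _ (embedding w).toRatAlgHom]
  intro ψ hψ
  have hψ' : embedding w x = ψ x := hψ
  have hw : w = InfinitePlace.mk ψ.toRingHom := by
    by_contra hne
    refine (hlt _ (Ne.symm hne)).ne ?_
    rw [InfinitePlace.apply]
    exact (congrArg _ hψ'.symm).trans (norm_embedding_eq w x)
  rw [← mk_embedding w, mk_eq_iff] at hw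
  rcases hw with h | h
  · exact congr_arg RingHom.toRatAlgHom h
  · refine absurd (Complex.conj_eq_iff_im.mp ?_) him
    rw [← ComplexEmbedding.conjugate_coe_eq, h]
    exact hψ'.symm

theorem adjoin_eq_top_and_intHeight_pow_finrank_eq {α : 𝓞 K} {w₀ : InfinitePlace K}
    (hα : α ≠ 0) (hlt : ∀ w ≠ w₀, w α < 1) (him : (embedding w₀ α).im ≠ 0) :
    ℚ⟮(α : K)⟯ = ⊤ ∧ intHeight (α : K) ^ finrank ℚ K = w₀ α ^ 2 := by
  have h1 : 1 ≤ w₀ α := one_le_of_lt_one hα hlt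
  refine ⟨adjoin_eq_top_of_lt_of_im_embedding_ne_zero (fun w hw => (hlt w hw).trans_le h1) him,
    ?_⟩
  rw [intHeight_pow_finrank_of_lt_one hlt, max_eq_right h1,
    (isComplex_of_im_embedding_ne_zero him).mult_eq_two]

theorem finite_setOf_forall_infinitePlace_le (C : ℝ) :
    {a : 𝓞 K | ∀ w : InfinitePlace K, w a ≤ C}.Finite :=
  ((Embeddings.finite_of_norm_le K ℂ C).preimage RingOfIntegers.coe_injective.injOn).subset
    fun a ha => ⟨a.isIntegral_coe, fun φ => ha (InfinitePlace.mk φ)⟩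

namespace mixedEmbedding

open MeasureTheory

variable (K) in
theorem minkowskiBound_one_eq :
    minkowskiBound K 1 =
      convexBodyLTFactor K * ENNReal.ofReal (minkowskiConst K ^ finrank ℚ K) := by
  have hds : nrRealPlaces K + 2 * nrComplexPlaces K = finrank ℚ K :=
    card_add_two_mul_card_eq_rank K
  rw [minkowskiBound, volume_fundamentalDomain_fractionalIdealLatticeBasis,
    volume_fundamentalDomain_latticeBasis, mixedEmbedding.finrank, minkowskiConst_pow_finrank,
    ← hds]
  simp only [Units.val_one, FractionalIdeal.absNorm_one, Rat.cast_one, ENNReal.ofReal_one, one_mul]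
  rw [← ENNReal.toReal_eq_toReal_iff' (by finiteness) (by finiteness)]
  simp only [ENNReal.toReal_mul, ENNReal.toReal_pow, ENNReal.toReal_inv, ENNReal.toReal_ofNat,
    ENNReal.coe_toReal]
  rw [ENNReal.toReal_ofReal (by positivity), Real.coe_sqrt, coe_nnnorm, Int.norm_eq_abs,
    convexBodyLTFactor]
  push_cast [NNReal.coe_real_pi]
  rw [inv_pow, pow_add, pow_mul', div_pow]
  field_simp

open scoped Classical in
theorem exists_ne_zero_lt_of_ne_and_le {f : InfinitePlace K → ℝ≥0} (w₀ : InfinitePlace K)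
    (h : minkowskiBound K 1 ≤ volume (convexBodyLT K f)) :
    ∃ a : 𝓞 K, a ≠ 0 ∧ (∀ w ≠ w₀, w a < f w) ∧ w₀ a ≤ f w₀ := by
  have hf : ∀ w, 0 < f w := by
    have := (minkowskiBound_pos K 1).trans_le h
    rw [convexBodyLT_volume, pos_iff_ne_zero, mul_ne_zero_iff] at this
    obtain ⟨-, hprod⟩ := this
    rw [ENNReal.coe_ne_zero, Finset.prod_ne_zero_iff] at hprod
    exact fun w => pos_of_ne_zero <| (pow_ne_zero_iff mult_ne_zero).mp (hprod w (Finset.mem_univ w))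
  have hvol (c : ℝ≥0) (hc : f w₀ < c) :
      minkowskiBound K 1 < volume (convexBodyLT K (Function.update f w₀ c)) := by
    refine h.trans_lt ?_
    rw [convexBodyLT_volume, convexBodyLT_volume]
    refine ENNReal.mul_lt_mul_right (ENNReal.coe_ne_zero.mpr (convexBodyLTFactor_ne_zero K))
      ENNReal.coe_ne_top (ENNReal.coe_lt_coe.mpr (Finset.prod_lt_prod
        (fun w _ => pow_pos (hf w) _) (fun w _ => ?_)
        ⟨w₀, Finset.mem_univ _, by simpa using pow_lt_pow_left₀ hc (hf w₀).le mult_ne_zero⟩))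
    rcases eq_or_ne w w₀ with rfl | hw
    · simpa using pow_le_pow_left₀ (hf w).le hc.le _
    · simp [hw]
  -- `S` is finite, so some `a ∈ S` minimises `w₀`; were `f w₀ < w₀ a`, Minkowski applied with
  -- `c = w₀ a` would produce an element of `S` with a smaller `w₀`.
  let S : Set (𝓞 K) := {a | a ≠ 0 ∧ (∀ w ≠ w₀, w a < f w) ∧ w₀ a < f w₀ + 1}
  have hS : S.Finite := by
    refine (finite_setOf_forall_infinitePlace_le (∑ w, ((f w : ℝ) + 1))).subset fun a ha w => ?_
    have : w a < f w + 1 := by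
      rcases eq_or_ne w w₀ with rfl | hw
      · exact ha.2.2
      · exact (ha.2.1 w hw).trans (lt_add_one _)
    exact this.le.trans <| Finset.single_le_sum (f := fun w => (f w : ℝ) + 1)
      (fun w _ => by positivity) (Finset.mem_univ w)
  have exists_mem_S (c : ℝ≥0) (hc : f w₀ < c) (hc' : c ≤ f w₀ + 1) : ∃ b ∈ S, w₀ b < c := by
    obtain ⟨b, hb0, hb⟩ := exists_ne_zero_mem_ringOfIntegers_lt K (hvol c hc)
    have hbc : w₀ b < c := by simpa using hb w₀
    exact ⟨b, ⟨hb0, fun w hw => by simpa [hw] using hb w,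
      hbc.trans_le (by exact_mod_cast hc')⟩, hbc⟩
  obtain ⟨a₁, ha₁, -⟩ := exists_mem_S (f w₀ + 1) (lt_add_one _) le_rfl
  obtain ⟨a, ⟨ha0, hlt, ha1⟩, hmin⟩ := S.exists_min_image (fun a => w₀ a) hS ⟨a₁, ha₁⟩
  refine ⟨a, ha0, hlt, le_of_not_gt fun hgt => ?_⟩
  obtain ⟨b, hbS, hb⟩ := exists_mem_S ⟨w₀ a, apply_nonneg _ _⟩ hgt ha1.le
  exact (hmin b hbS).not_gt hb

theorem exists_ne_zero_mul_lt_one_of_ne_and_pow_le (w₀ : InfinitePlace K)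
    {m : InfinitePlace K → ℝ} (hm : ∀ w, 0 < m w) :
    ∃ a : 𝓞 K, a ≠ 0 ∧ (∀ w ≠ w₀, w a * m w < 1) ∧
      (w₀ a * m w₀) ^ mult w₀ ≤ minkowskiConst K ^ finrank ℚ K * ∏ w, m w ^ mult w := by
  classical
  set c := minkowskiConst K ^ finrank ℚ K
  have hc : 0 ≤ c := pow_nonneg minkowskiConst_nonneg _
  obtain ⟨g, hg, hprod⟩ := adjust_f K c.toNNReal (f := fun w => (m w)⁻¹.toNNReal)
    fun w _ => (Real.toNNReal_pos.mpr (inv_pos.mpr (hm w))).ne'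
  obtain ⟨a, ha0, hlt, hle⟩ := exists_ne_zero_lt_of_ne_and_le w₀ (f := g) <| by
    rw [minkowskiBound_one_eq, convexBodyLT_volume, hprod, ENNReal.ofReal]
  have hgm (w : InfinitePlace K) (hw : w ≠ w₀) : (g w : ℝ) * m w = 1 := by
    rw [hg w hw, Real.coe_toNNReal _ (inv_nonneg.mpr (hm w).le), inv_mul_cancel₀ (hm w).ne']
  have hprod' : ∏ w, (g w : ℝ) ^ mult w = c := by
    simpa [Real.coe_toNNReal _ hc] using congrArg NNReal.toReal hprod
  refine ⟨a, ha0, fun w hw => ?_, ?_⟩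
  · calc w a * m w < g w * m w := mul_lt_mul_of_pos_right (hlt w hw) (hm w)
      _ = 1 := hgm w hw
  · calc (w₀ a * m w₀) ^ mult w₀ ≤ (g w₀ * m w₀) ^ mult w₀ :=
          pow_le_pow_left₀ (mul_nonneg (apply_nonneg _ _) (hm w₀).le)
            (mul_le_mul_of_nonneg_right hle (hm w₀).le) _
      _ = ∏ w, ((g w : ℝ) * m w) ^ mult w :=
        (Fintype.prod_eq_single (f := fun w => ((g w : ℝ) * m w) ^ mult w) w₀
          fun w hw => by rw [hgm w hw, one_pow]).symm
      _ = c * ∏ w, m w ^ mult w := by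
        simp_rw [mul_pow, Finset.prod_mul_distrib, hprod']

end mixedEmbedding

end NumberField

/-- Theorem 1.2: if $\mu\in O_K$ is not totally real, then there is $\alpha\in O_K$
with $K=\mathbb{Q}(\alpha)$ and $H(\alpha)\le H(\mu)c_K$. -/
theorem statement10 (K : Type*) [Field K] [NumberField K]
    (μ : 𝓞 K) (hμ : ∃ φ : K →+* ℂ, (φ (μ : K)).im ≠ 0) :
    ∃ α : 𝓞 K, IntermediateField.adjoin ℚ {(α : K)} = ⊤ ∧
      intHeight (α : K) ≤ intHeight (μ : K) * minkowskiConst K := by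
  obtain ⟨φ, hφ⟩ := hμ
  set w₀ := InfinitePlace.mk φ
  have hμ₀ : (embedding w₀ μ).im ≠ 0 := im_embedding_mk_ne_zero hφ
  obtain ⟨a, ha0, hlt, hle⟩ := mixedEmbedding.exists_ne_zero_mul_lt_one_of_ne_and_pow_le w₀
    (m := fun w => max 1 (w μ)) fun w => one_pos.trans_le (le_max_left _ _)
  obtain ⟨α, hα0, hαlt, hαim, hαa⟩ := exists_ne_zero_lt_one_and_im_ne_zero ha0 hlt hμ₀
  obtain ⟨hprim, hheight⟩ := adjoin_eq_top_and_intHeight_pow_finrank_eq hα0 hαlt hαim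
  refine ⟨α, hprim, ?_⟩
  rw [← pow_le_pow_iff_left₀ (intHeight_nonneg _)
    (mul_nonneg (intHeight_nonneg _) minkowskiConst_nonneg) (finrank_pos (R := ℚ) (M := K)).ne',
    mul_pow, hheight, intHeight_pow_finrank, mul_comm]
  rw [(isComplex_of_im_embedding_ne_zero hμ₀).mult_eq_two] at hle
  exact (pow_le_pow_left₀ (apply_nonneg _ _) hαa 2).trans hle
end

section
/- Let K be a number field with Tor(K^×) ≠ {±1}, i.e., K contains a root of unity other than ±1. Then there exists an algebraic integer α ∈ O_K such that K = Q(α) and H(α) ≤ c_K = (2/π)^{s/d}|Δ_K|^{1/(2d)}. -/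
/-!
Minkowski's theorem applied to the box that is small at every infinite place but one, `w₀`,
gives nonzero algebraic integers `α` with `w α < 1` for `w ≠ w₀` and
`w₀(α) ^ mult w₀ < C` for every `C > (2/π)^s √|Δ_K| = c_K ^ d`; since algebraic integers with
bounded conjugates form a finite set, the bound can be taken non-strict. For such `α` the
product `∏_φ max 1 |φ α|` is exactly `w₀(α) ^ mult w₀ ≤ c_K ^ d`, so `H(α) ≤ c_K`.
Dominance at the single place `w₀` forces `ℚ(α) = K` as soon as the embedding of `α` at `w₀` is
not real. This is where the root of unity `ζ ≠ ±1` enters: it is non-real under every embedding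
and has absolute value `1` at every place, so replacing `α` by `ζ α` if necessary makes the
embedding at `w₀` non-real without changing any `w(α)`.
-/

open NumberField

open InfinitePlace mixedEmbedding Module
open scoped IntermediateField NNReal ENNReal Real

theorem Complex.im_ne_zero_of_pow_eq_one {z : ℂ} {n : ℕ} (hz : z ^ n = 1) (hn : n ≠ 0)
    (h₁ : z ≠ 1) (h₂ : z ≠ -1) : z.im ≠ 0 := by
  intro him
  have hre : |z.re| = 1 :=
    (Complex.abs_re_eq_norm.mpr him).trans (Complex.norm_eq_one_of_pow_eq_one hz hn)
  rcases (abs_eq zero_le_one).mp hre with h | h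
  · exact h₁ (Complex.ext (by simp [h]) (by simp [him]))
  · exact h₂ (Complex.ext (by simp [h]) (by simp [him]))

theorem exists_mem_le_of_forall_exists_mem_lt {α : Type*} {S : Set α} {f : α → ℝ} {B : ℝ}
    (hfin : ∀ R, {x ∈ S | f x ≤ R}.Finite) (h : ∀ C, B < C → ∃ x ∈ S, f x < C) :
    ∃ x ∈ S, f x ≤ B := by
  obtain ⟨x₀, hx₀, hfx₀⟩ := h (B + 1) (lt_add_one B)
  obtain ⟨a, ⟨haS, -⟩, hmin⟩ := Set.exists_min_image _ f (hfin (B + 1)) ⟨x₀, hx₀, hfx₀.le⟩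
  refine ⟨a, haS, not_lt.1 fun hBa ↦ ?_⟩
  obtain ⟨x, hxS, hfx⟩ := h (f a) hBa
  have hx₀a := hmin x₀ ⟨hx₀, hfx₀.le⟩
  exact (hmin x ⟨hxS, by linarith⟩).not_gt hfx

namespace NumberField

variable {K : Type*} [Field K]

theorem InfinitePlace.apply_eq_one_of_pow_eq_one {ζ : K} {n : ℕ} (hζ : ζ ^ n = 1) (hn : n ≠ 0)
    (w : InfinitePlace K) : w ζ = 1 := by
  rw [← norm_embedding_eq]
  exact Complex.norm_eq_one_of_pow_eq_one (by rw [← map_pow, hζ, map_one]) hn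

theorem exists_forall_infinitePlace_eq_and_im_ne_zero {ζ : K} {n : ℕ} (hζ : ζ ^ n = 1)
    (hn : n ≠ 0) (h₁ : ζ ≠ 1) (h₂ : ζ ≠ -1) (w₀ : InfinitePlace K) {a : 𝓞 K} (ha : a ≠ 0) :
    ∃ b : 𝓞 K, b ≠ 0 ∧ (∀ w : InfinitePlace K, w b = w a) ∧ (embedding w₀ b).im ≠ 0 := by
  by_cases him : (embedding w₀ a).im = 0
  swap
  · exact ⟨a, ha, fun _ ↦ rfl, him⟩
  let ζ' : 𝓞 K := ⟨ζ, IsIntegral.of_pow (Nat.pos_of_ne_zero hn) (hζ ▸ isIntegral_one)⟩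
  have hζ₀ : ζ' ≠ 0 := fun h ↦ by
    have : ζ = 0 := congr_arg ((↑) : 𝓞 K → K) h
    simp [this, zero_pow hn] at hζ
  have hcoe : ((ζ' * a : 𝓞 K) : K) = ζ * a := rfl
  refine ⟨ζ' * a, mul_ne_zero hζ₀ ha, fun w ↦ ?_, ?_⟩
  · rw [hcoe, map_mul, w.apply_eq_one_of_pow_eq_one hζ hn, one_mul]
  · have hre : (embedding w₀ a).re ≠ 0 := fun hre ↦ ha <| RingOfIntegers.coe_eq_zero_iff.mp <|
      (map_eq_zero _).mp (Complex.ext hre him)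
    rw [hcoe, map_mul, Complex.mul_im, him, mul_zero, zero_add]
    have hφ₁ : embedding w₀ ζ ≠ 1 := by simpa using (embedding w₀).injective.ne h₁
    have hφ₂ : embedding w₀ ζ ≠ -1 := by simpa using (embedding w₀).injective.ne h₂
    exact mul_ne_zero (Complex.im_ne_zero_of_pow_eq_one (by rw [← map_pow, hζ, map_one]) hn
      hφ₁ hφ₂) hre

variable [NumberField K]

theorem adjoin_simple_eq_top_of_infinitePlace_lt_of_im_ne_zero {a : 𝓞 K} {w₀ : InfinitePlace K}
    (ha : a ≠ 0) (hlt : ∀ ⦃w⦄, w ≠ w₀ → w a < 1) (him : (embedding w₀ a).im ≠ 0) :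
    ℚ⟮(a : K)⟯ = ⊤ := by
  rw [Field.primitive_element_iff_algHom_eq_of_eval ℚ ℂ (fun _ ↦ IsAlgClosed.splits _) _
    (embedding w₀).toRatAlgHom]
  intro ψ hψ
  simp only [RingHom.toRatAlgHom_apply] at hψ
  have hw₀ : w₀ = InfinitePlace.mk ψ.toRingHom := by
    have h := one_le_of_lt_one ha hlt
    rw [← norm_embedding_eq, hψ] at h
    contrapose! h
    exact hlt h.symm
  rw [(mk_embedding w₀).symm, mk_eq_iff] at hw₀
  refine congr_arg RingHom.toRatAlgHom (hw₀.resolve_right fun hconj ↦ him ?_)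
  rw [← Complex.conj_eq_iff_im, ← ComplexEmbedding.conjugate_coe_eq, hconj]
  exact hψ.symm

noncomputable def minkowskiConstPow (K : Type*) [Field K] [NumberField K] : ℝ :=
  (2 / π) ^ nrComplexPlaces K * √|(discr K : ℝ)|

theorem minkowskiConst_eq :
    minkowskiConst K = minkowskiConstPow K ^ ((finrank ℚ K : ℝ)⁻¹) := by
  have hd : (finrank ℚ K : ℝ) ≠ 0 := Nat.cast_ne_zero.mpr finrank_pos.ne'
  rw [minkowskiConst, minkowskiConstPow, Real.mul_rpow (by positivity) (by positivity),
    ← Real.rpow_natCast (2 / π), ← Real.rpow_mul (by positivity), Real.sqrt_eq_rpow,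
    ← Real.rpow_mul (abs_nonneg _)]
  congr 2
  field_simp

theorem minkowskiBound_one_toReal :
    (minkowskiBound K ↑1).toReal =
      2⁻¹ ^ nrComplexPlaces K * √|(discr K : ℝ)| * 2 ^ finrank ℚ K := by
  classical
  rw [minkowskiBound, volume_fundamentalDomain_fractionalIdealLatticeBasis,
    volume_fundamentalDomain_latticeBasis, mixedEmbedding.finrank, Units.val_one,
    FractionalIdeal.absNorm_one, Rat.cast_one, ENNReal.ofReal_one, one_mul]
  simp [ENNReal.toReal_mul, Int.norm_eq_abs]

theorem minkowskiBound_one_lt {C : ℝ≥0} (hC : minkowskiConstPow K < C) :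
    minkowskiBound K ↑1 < convexBodyLTFactor K * C := by
  rw [← ENNReal.coe_mul, ← ENNReal.toReal_lt_toReal (minkowskiBound_lt_top K ↑1).ne
    ENNReal.coe_ne_top, minkowskiBound_one_toReal, ENNReal.coe_toReal, convexBodyLTFactor]
  push_cast
  rw [NNReal.coe_real_pi]
  have hd : finrank ℚ K = nrRealPlaces K + nrComplexPlaces K + nrComplexPlaces K := by
    rw [← card_add_two_mul_card_eq_rank]; ring
  have hC' : 2 ^ nrComplexPlaces K * √|(discr K : ℝ)| < π ^ nrComplexPlaces K * C := by
    rwa [minkowskiConstPow, div_pow, div_mul_eq_mul_div, div_lt_iff₀ (by positivity),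
      mul_comm (C : ℝ)] at hC
  calc 2⁻¹ ^ nrComplexPlaces K * √|(discr K : ℝ)| * 2 ^ finrank ℚ K
      = 2 ^ nrRealPlaces K * (2 ^ nrComplexPlaces K * √|(discr K : ℝ)|) := by
        rw [hd, pow_add, pow_add, inv_pow]; field_simp
    _ < 2 ^ nrRealPlaces K * (π ^ nrComplexPlaces K * C) := by gcongr
    _ = 2 ^ nrRealPlaces K * π ^ nrComplexPlaces K * C := by ring

theorem exists_ne_zero_lt_one_of_ne_of_pow_mult_lt (w₀ : InfinitePlace K) {C : ℝ≥0}
    (hC : minkowskiConstPow K < C) :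
    ∃ a : 𝓞 K, a ≠ 0 ∧ (∀ ⦃w⦄, w ≠ w₀ → w a < 1) ∧ w₀ a ^ mult w₀ < C := by
  classical
  let f : InfinitePlace K → ℝ≥0 := fun w ↦ if w = w₀ then C ^ ((mult w₀ : ℝ)⁻¹) else 1
  have hprod : ∏ w, f w ^ mult w = C := by
    rw [Fintype.prod_eq_single w₀ fun w hw ↦ by simp [f, hw]]
    simp [f, NNReal.rpow_inv_natCast_pow _ mult_ne_zero]
  have hvol : minkowskiBound K ↑1 < MeasureTheory.volume (convexBodyLT K f) := by
    rw [convexBodyLT_volume, hprod]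
    exact minkowskiBound_one_lt hC
  obtain ⟨a, ha, hlt⟩ := exists_ne_zero_mem_ringOfIntegers_lt K hvol
  refine ⟨a, ha, fun w hw ↦ by simpa [f, hw] using hlt w, ?_⟩
  have hw₀ : w₀ a < (C ^ ((mult w₀ : ℝ)⁻¹) : ℝ≥0) := by simpa [f] using hlt w₀
  calc w₀ a ^ mult w₀ < ((C ^ ((mult w₀ : ℝ)⁻¹) : ℝ≥0) : ℝ) ^ mult w₀ :=
        pow_lt_pow_left₀ hw₀ (apply_nonneg _ _) mult_ne_zero
    _ = C := by rw [← NNReal.coe_pow, NNReal.rpow_inv_natCast_pow _ mult_ne_zero]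

theorem finite_setOf_lt_one_of_ne_of_le (w₀ : InfinitePlace K) (R : ℝ) :
    {a : 𝓞 K | (∀ ⦃w⦄, w ≠ w₀ → w a < 1) ∧ w₀ a ≤ R}.Finite := by
  refine ((Embeddings.finite_of_norm_le K ℂ (max 1 R)).preimage
    RingOfIntegers.coe_injective.injOn).subset ?_
  rintro a ⟨hlt, hle⟩
  refine ⟨a.isIntegral_coe, fun φ ↦ ?_⟩
  change InfinitePlace.mk φ a ≤ max 1 R
  by_cases hφ : InfinitePlace.mk φ = w₀
  · exact hφ ▸ le_max_of_le_right hle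
  · exact le_max_of_le_left (hlt hφ).le

theorem exists_ne_zero_lt_one_of_ne_of_pow_mult_le (w₀ : InfinitePlace K) :
    ∃ a : 𝓞 K, a ≠ 0 ∧ (∀ ⦃w⦄, w ≠ w₀ → w a < 1) ∧ w₀ a ^ mult w₀ ≤ minkowskiConstPow K := by
  let S := {a : 𝓞 K | a ≠ 0 ∧ ∀ ⦃w⦄, w ≠ w₀ → w a < 1}
  have hfin : ∀ R, {a ∈ S | w₀ a ^ mult w₀ ≤ R}.Finite := fun R ↦
    (finite_setOf_lt_one_of_ne_of_le w₀ R).subset fun a ⟨⟨ha, hlt⟩, hR⟩ ↦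
      ⟨hlt, (le_self_pow₀ (one_le_of_lt_one ha hlt) mult_ne_zero).trans hR⟩
  have hex : ∀ C, minkowskiConstPow K < C → ∃ a ∈ S, w₀ a ^ mult w₀ < C := fun C hC ↦ by
    have hT : 0 ≤ minkowskiConstPow K := by unfold minkowskiConstPow; positivity
    obtain ⟨a, ha, hlt, hC'⟩ := exists_ne_zero_lt_one_of_ne_of_pow_mult_lt w₀
      (C := ⟨C, hT.trans hC.le⟩) hC
    exact ⟨a, ⟨ha, hlt⟩, hC'⟩
  obtain ⟨a, ⟨ha, hlt⟩, hle⟩ := exists_mem_le_of_forall_exists_mem_lt hfin hex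
  exact ⟨a, ha, hlt, hle⟩

theorem prod_embeddings_eq_prod_infinitePlace (f : ℝ → ℝ) (x : K) :
    ∏ φ : K →+* ℂ, f ‖φ x‖ = ∏ w : InfinitePlace K, f (w x) ^ mult w := by
  classical
  rw [← Finset.prod_fiberwise Finset.univ InfinitePlace.mk]
  refine Finset.prod_congr rfl fun w _ ↦ ?_
  rw [Finset.prod_congr rfl fun φ hφ ↦
      show f ‖φ x‖ = f (w x) by rw [← (Finset.mem_filter.mp hφ).2]; rfl,
    Finset.prod_const, card_filter_mk_eq]

theorem intHeight_eq_pow_mult (w₀ : InfinitePlace K) {a : 𝓞 K} (ha : a ≠ 0)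
    (hlt : ∀ ⦃w⦄, w ≠ w₀ → w a < 1) :
    intHeight (a : K) = (w₀ a ^ mult w₀) ^ ((finrank ℚ K : ℝ)⁻¹) := by
  rw [intHeight, prod_embeddings_eq_prod_infinitePlace (max 1),
    Fintype.prod_eq_single w₀ fun w hw ↦ by rw [max_eq_left (hlt hw).le, one_pow],
    max_eq_right (one_le_of_lt_one ha hlt)]

end NumberField

/-- Corollary 1.1: if $K$ contains a root of unity other than $\pm 1$, then there is
$\alpha\in O_K$ with $K=\mathbb{Q}(\alpha)$ and $H(\alpha)\le c_K$. -/
theorem statement11 (K : Type*) [Field K] [NumberField K]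
    (htor : ∃ x : K, (∃ n : ℕ, 0 < n ∧ x ^ n = 1) ∧ x ≠ 1 ∧ x ≠ -1) :
    ∃ α : 𝓞 K, IntermediateField.adjoin ℚ {(α : K)} = ⊤ ∧
      intHeight (α : K) ≤ minkowskiConst K := by
  obtain ⟨ζ, ⟨n, hn, hζ⟩, h₁, h₂⟩ := htor
  obtain ⟨w₀⟩ := (inferInstance : Nonempty (InfinitePlace K))
  obtain ⟨a, ha, hlt, hle⟩ := exists_ne_zero_lt_one_of_ne_of_pow_mult_le w₀
  obtain ⟨b, hb, hba, him⟩ := exists_forall_infinitePlace_eq_and_im_ne_zero hζ hn.ne' h₁ h₂ w₀ ha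
  have hlt' : ∀ ⦃w⦄, w ≠ w₀ → w b < 1 := fun w hw ↦ hba w ▸ hlt hw
  refine ⟨b, adjoin_simple_eq_top_of_infinitePlace_lt_of_im_ne_zero hb hlt' him, ?_⟩
  rw [intHeight_eq_pow_mult w₀ hb hlt', hba, minkowskiConst_eq]
  exact Real.rpow_le_rpow (by positivity) hle (by positivity)
end

section
/- Let α be an algebraic integer with α² = √3 − 2 and K = Q(α). Then the only roots of unity in K are ±1, i.e., Tor(K^×) = {±1}. -/
open NumberField

open Polynomial IntermediateField

/-!
Every element of `K = ℚ(α)` is `u + vα` with `u, v ∈ ℚ(√3) ⊂ ℝ`, and `α` is purely imaginary.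
So if `w ∈ K` has a real square `c`, then `c` or `-c(2 + √3)` is a square in `ℚ(√3)`; since
`2 + √3`, `3(2 + √3)` and `5` are not, `K` contains no square root of `-1`, `-3` or `5`. This
excludes primitive roots of unity of orders `4`, `3` and `5` (for `5`, `2(ζ + ζ⁻¹) + 1` squares
to `5`), and `[K : ℚ] ≤ 4` excludes every prime order `p ≥ 7`. A root of unity other than `±1`
has a power of one of these orders.
-/

theorem Rat.sq_ne_natCast_of_lt_of_lt {m n : ℕ} (hl : m ^ 2 < n) (hr : n < (m + 1) ^ 2)
    (x : ℚ) : x ^ 2 ≠ n := fun h => by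
  obtain ⟨t, ht⟩ := Rat.isSquare_natCast_iff.mp ⟨x, by rw [← h, sq]⟩
  exact Nat.not_exists_sq' hl hr ⟨t, by rw [ht, sq]⟩

theorem eq_zero_of_rat_add_rat_mul_sqrt_three_eq_zero {p q : ℚ} (h : (p : ℝ) + q * √3 = 0) :
    p = 0 ∧ q = 0 := by
  obtain rfl | hq := eq_or_ne q 0
  · exact ⟨by simpa using h, rfl⟩
  · refine absurd ⟨-p / q, ?_⟩ (Nat.prime_three.irrational_sqrt)
    push_cast
    field_simp
    linarith

theorem eq_of_sq_rat_add_rat_mul_sqrt_three_eq {p q r s : ℚ}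
    (h : ((p : ℝ) + q * √3) ^ 2 = r + s * √3) : p ^ 2 + 3 * q ^ 2 = r ∧ 2 * p * q = s := by
  have h3 : √3 ^ 2 = 3 := Real.sq_sqrt (by norm_num)
  have := eq_zero_of_rat_add_rat_mul_sqrt_three_eq_zero
    (p := p ^ 2 + 3 * q ^ 2 - r) (q := 2 * p * q - s)
    (by push_cast; linear_combination h - q ^ 2 * h3)
  constructor <;> linarith [this.1, this.2]

theorem sq_rat_add_rat_mul_sqrt_three_ne_two_add_sqrt_three (p q : ℚ) :
    ((p : ℝ) + q * √3) ^ 2 ≠ 2 + √3 := by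
  intro h
  obtain ⟨h₁, h₂⟩ :=
    eq_of_sq_rat_add_rat_mul_sqrt_three_eq (r := 2) (s := 1) (by push_cast; simpa using h)
  have : (2 * p ^ 2 - 1) * (2 * p ^ 2 - 3) = 0 := by
    linear_combination (4 * p ^ 2) * h₁ - 3 * (2 * p * q + 1) * h₂
  rcases mul_eq_zero.mp this with h | h
  · exact Rat.sq_ne_natCast_of_lt_of_lt (m := 1) (n := 2) (by norm_num) (by norm_num) (2 * p)
      (by push_cast; linarith)
  · exact Rat.sq_ne_natCast_of_lt_of_lt (m := 2) (n := 6) (by norm_num) (by norm_num) (2 * p)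
      (by push_cast; linarith)

theorem sq_rat_add_rat_mul_sqrt_three_ne_three_mul_two_add_sqrt_three (p q : ℚ) :
    ((p : ℝ) + q * √3) ^ 2 ≠ 3 * (2 + √3) := by
  have h3 : √3 ^ 2 = 3 := Real.sq_sqrt (by norm_num)
  intro h
  apply sq_rat_add_rat_mul_sqrt_three_ne_two_add_sqrt_three q (p / 3)
  have : ((p : ℝ) + q * √3) ^ 2 = 3 * ((q : ℝ) + (p / 3 : ℚ) * √3) ^ 2 := by
    push_cast; linear_combination ((q : ℝ) ^ 2 - p ^ 2 / 3) * h3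
  linarith

theorem sq_rat_add_rat_mul_sqrt_three_ne_five (p q : ℚ) : ((p : ℝ) + q * √3) ^ 2 ≠ 5 := by
  intro h
  obtain ⟨h₁, h₂⟩ :=
    eq_of_sq_rat_add_rat_mul_sqrt_three_eq (r := 5) (s := 0) (by push_cast; simpa using h)
  rcases mul_eq_zero.mp (show p * q = 0 by linarith) with rfl | rfl
  · exact Rat.sq_ne_natCast_of_lt_of_lt (m := 3) (n := 15) (by norm_num) (by norm_num) (3 * q)
      (by push_cast; linarith)
  · exact Rat.sq_ne_natCast_of_lt_of_lt (m := 2) (n := 5) (by norm_num) (by norm_num) p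
      (by push_cast; linarith)

theorem IntermediateField.exists_natDegree_lt_eq_aeval {K L : Type*} [Field K] [Field L]
    [Algebra K L] {x : L} (hx : IsIntegral K x) {z : L} (hz : z ∈ K⟮x⟯) :
    ∃ f : K[X], f.natDegree < (minpoly K x).natDegree ∧ z = aeval x f := by
  obtain ⟨f, hdeg, hf⟩ := (adjoin.powerBasis hx).exists_eq_aeval ⟨z, hz⟩
  refine ⟨f, hdeg, ?_⟩
  simpa using congrArg (algebraMap K⟮x⟯ L) hf

theorem IsPrimitiveRoot.totient_le_finrank_of_mem {L : Type*} [Field L] [CharZero L]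
    {E : IntermediateField ℚ L} [FiniteDimensional ℚ E] {ζ : L} {n : ℕ}
    (h : IsPrimitiveRoot ζ n) (hn : 0 < n) (hζ : ζ ∈ E) : n.totient ≤ Module.finrank ℚ E := by
  rw [← natDegree_cyclotomic n ℚ, cyclotomic_eq_minpoly_rat h hn,
    ← IntermediateField.minpoly_eq ⟨ζ, hζ⟩]
  exact minpoly.natDegree_le _

theorem isPrimitiveRoot_pow_orderOf_div {M : Type*} [CommMonoid M] {x : M} {d : ℕ}
    (hx : orderOf x ≠ 0) (hd : d ∣ orderOf x) : IsPrimitiveRoot (x ^ (orderOf x / d)) d := by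
  simpa [orderOf_pow_orderOf_div hx hd] using IsPrimitiveRoot.orderOf (x ^ (orderOf x / d))

namespace AdjoinSqrtSqrtThreeSubTwo

variable {α : ℂ} (hα : α ^ 2 = (√3 : ℂ) - 2)
include hα

theorem aeval_eq_zero : aeval α (X ^ 4 + 4 * X ^ 2 + 1 : ℚ[X]) = 0 := by
  have h3 : ((√3 : ℝ) : ℂ) ^ 2 = 3 := by exact_mod_cast Real.sq_sqrt (by norm_num)
  simp only [map_add, map_pow, map_mul, aeval_X, map_one, map_ofNat]
  linear_combination (α ^ 2 + (√3 : ℂ) + 2) * hα + h3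

theorem isIntegral : IsIntegral ℚ α :=
  ⟨_, by monicity!, aeval_eq_zero hα⟩

theorem natDegree_minpoly_le : (minpoly ℚ α).natDegree ≤ 4 := by
  have hmonic : (X ^ 4 + 4 * X ^ 2 + 1 : ℚ[X]).Monic := by monicity!
  calc (minpoly ℚ α).natDegree ≤ (X ^ 4 + 4 * X ^ 2 + 1 : ℚ[X]).natDegree :=
        natDegree_le_of_dvd (minpoly.dvd ℚ α (aeval_eq_zero hα)) hmonic.ne_zero
    _ = 4 := by compute_degree!

theorem re_eq_zero_and_im_ne_zero : α.re = 0 ∧ α.im ≠ 0 := by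
  have hlt : √3 < 2 := by
    nlinarith [Real.sq_sqrt (show (0 : ℝ) ≤ 3 by norm_num), Real.sqrt_nonneg 3]
  have hre := congrArg Complex.re hα
  have him := congrArg Complex.im hα
  simp only [sq, Complex.mul_re, Complex.mul_im, Complex.sub_re, Complex.sub_im,
    Complex.ofReal_re, Complex.ofReal_im] at hre him
  norm_num at hre him
  constructor
  · rcases mul_eq_zero.mp (by linarith : α.re * α.im = 0) with h | h
    · exact h
    · nlinarith [sq_nonneg α.re]
  · intro h
    nlinarith [sq_nonneg α.re]

theorem exists_eq_add_mul_of_mem {z : ℂ} (hz : z ∈ ℚ⟮α⟯) :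
    ∃ p q r s : ℚ, z = ((p + q * √3 : ℝ) : ℂ) + ((r + s * √3 : ℝ) : ℂ) * α := by
  obtain ⟨f, hdeg, rfl⟩ := exists_natDegree_lt_eq_aeval (isIntegral hα) hz
  rw [aeval_eq_sum_range' (hdeg.trans_le (natDegree_minpoly_le hα))]
  refine ⟨f.coeff 0 - 2 * f.coeff 2, f.coeff 2, f.coeff 1 - 2 * f.coeff 3, f.coeff 3, ?_⟩
  simp only [Finset.sum_range_succ, Finset.sum_range_zero, Rat.smul_def]
  push_cast
  linear_combination (f.coeff 2 + f.coeff 3 * α) * hα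

theorem exists_sq_eq_of_sq_eq_ofReal {w : ℂ} (hw : w ∈ ℚ⟮α⟯) {c : ℝ} (h : w ^ 2 = c) :
    ∃ p q : ℚ, ((p : ℝ) + q * √3) ^ 2 = c ∨ ((p : ℝ) + q * √3) ^ 2 = -c * (2 + √3) := by
  obtain ⟨hre, him⟩ := re_eq_zero_and_im_ne_zero hα
  obtain ⟨p, q, r, s, rfl⟩ := exists_eq_add_mul_of_mem hα hw
  set u : ℝ := p + q * √3
  set v : ℝ := r + s * √3
  have h' : ((u ^ 2 + v ^ 2 * (√3 - 2) : ℝ) : ℂ) + ((2 * u * v : ℝ) : ℂ) * α = c := by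
    push_cast
    linear_combination h - v ^ 2 * hα
  have hc := congrArg Complex.re h'
  have h0 := congrArg Complex.im h'
  simp only [Complex.add_re, Complex.add_im, Complex.re_ofReal_mul, Complex.im_ofReal_mul,
    Complex.ofReal_re, Complex.ofReal_im, hre] at hc h0
  have h3 : √3 ^ 2 = 3 := Real.sq_sqrt (by norm_num)
  have huv : u = 0 ∨ v = 0 := by simpa [him] using h0
  rcases huv with hu | hv
  · exact ⟨r, s, Or.inr (by rw [hu] at hc; linear_combination (-(2 + √3)) * hc + v ^ 2 * h3)⟩
  · exact ⟨p, q, Or.inl (by rw [hv] at hc; linarith)⟩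

theorem sq_ne_neg_one {w : ℂ} (hw : w ∈ ℚ⟮α⟯) : w ^ 2 ≠ -1 := by
  intro h
  obtain ⟨p, q, hpq | hpq⟩ := exists_sq_eq_of_sq_eq_ofReal hα hw (c := -1) (by simpa using h)
  · nlinarith [sq_nonneg ((p : ℝ) + q * √3)]
  · exact sq_rat_add_rat_mul_sqrt_three_ne_two_add_sqrt_three p q (by simpa using hpq)

theorem sq_ne_neg_three {w : ℂ} (hw : w ∈ ℚ⟮α⟯) : w ^ 2 ≠ -3 := by
  intro h
  obtain ⟨p, q, hpq | hpq⟩ := exists_sq_eq_of_sq_eq_ofReal hα hw (c := -3) (by simpa using h)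
  · nlinarith [sq_nonneg ((p : ℝ) + q * √3)]
  · exact sq_rat_add_rat_mul_sqrt_three_ne_three_mul_two_add_sqrt_three p q
      (by simpa using hpq)

theorem sq_ne_five {w : ℂ} (hw : w ∈ ℚ⟮α⟯) : w ^ 2 ≠ 5 := by
  intro h
  obtain ⟨p, q, hpq | hpq⟩ := exists_sq_eq_of_sq_eq_ofReal hα hw (c := 5) (by simpa using h)
  · exact sq_rat_add_rat_mul_sqrt_three_ne_five p q hpq
  · nlinarith [sq_nonneg ((p : ℝ) + q * √3), Real.sqrt_nonneg 3]

theorem not_isPrimitiveRoot_four {ζ : ℂ} (hζ : ζ ∈ ℚ⟮α⟯) : ¬IsPrimitiveRoot ζ 4 := fun h =>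
  sq_ne_neg_one hα hζ
    (h.pow_of_dvd (p := 2) (by norm_num) (by norm_num)).eq_neg_one_of_two_right

theorem not_isPrimitiveRoot_three {ζ : ℂ} (hζ : ζ ∈ ℚ⟮α⟯) : ¬IsPrimitiveRoot ζ 3 := by
  intro h
  have hsum : 1 + ζ + ζ ^ 2 = 0 := by simpa [Finset.sum_range_succ] using h.geom_sum_eq_zero
  exact sq_ne_neg_three hα (add_mem (mul_mem (ofNat_mem _ 2) hζ) (one_mem _))
    (by linear_combination 4 * hsum)

theorem not_isPrimitiveRoot_five {ζ : ℂ} (hζ : ζ ∈ ℚ⟮α⟯) : ¬IsPrimitiveRoot ζ 5 := by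
  intro h
  have hsum : 1 + ζ + ζ ^ 2 + ζ ^ 3 + ζ ^ 4 = 0 := by
    simpa [Finset.sum_range_succ] using h.geom_sum_eq_zero
  have hζ0 : ζ ≠ 0 := h.ne_zero (by norm_num)
  refine sq_ne_five hα
    (add_mem (mul_mem (ofNat_mem _ 2) (add_mem hζ (inv_mem hζ))) (one_mem _)) ?_
  field_simp
  linear_combination 4 * hsum

theorem not_isPrimitiveRoot_of_odd_prime {p : ℕ} (hp : p.Prime) (hodd : Odd p) {ζ : ℂ}
    (hζ : ζ ∈ ℚ⟮α⟯) : ¬IsPrimitiveRoot ζ p := by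
  intro h
  have := adjoin.finiteDimensional (isIntegral hα)
  have hle : p.totient ≤ 4 :=
    calc p.totient ≤ Module.finrank ℚ ℚ⟮α⟯ := h.totient_le_finrank_of_mem hp.pos hζ
      _ = (minpoly ℚ α).natDegree := adjoin.finrank (isIntegral hα)
      _ ≤ 4 := natDegree_minpoly_le hα
  rw [Nat.totient_prime hp] at hle
  have := hp.two_le
  have : p ≤ 5 := by omega
  interval_cases p
  · exact absurd hodd (by decide)
  · exact not_isPrimitiveRoot_three hα hζ h
  · exact absurd hp (by norm_num)
  · exact not_isPrimitiveRoot_five hα hζ h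

end AdjoinSqrtSqrtThreeSubTwo

open AdjoinSqrtSqrtThreeSubTwo

/-- The quartic field $K=\mathbb{Q}(\alpha)$ with $\alpha^2=\sqrt3-2$ has
$\mathrm{Tor}(K^\times)=\{\pm 1\}$: its only roots of unity are $\pm 1$. -/
theorem statement16 (α : ℂ) (hα : α ^ 2 = (Real.sqrt 3 : ℂ) - 2) :
    ∀ x ∈ IntermediateField.adjoin ℚ {α}, (∃ n : ℕ, 0 < n ∧ x ^ n = 1) →
      x = 1 ∨ x = -1 := by
  rintro x hx ⟨n, hn, hxn⟩
  have hord : orderOf x ≠ 0 := (isOfFinOrder_iff_pow_eq_one.mpr ⟨n, hn, hxn⟩).orderOf_pos.ne'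
  by_cases h2 : orderOf x ≤ 2
  · have : orderOf x ∣ 2 := by
      obtain h | h : orderOf x = 1 ∨ orderOf x = 2 := by omega
      all_goals simp [h]
    exact sq_eq_one_iff.mp (orderOf_dvd_iff_pow_eq_one.mp this)
  · obtain h4 | ⟨p, hp, hdvd, hodd⟩ :=
      Nat.four_dvd_or_exists_odd_prime_and_dvd_of_two_lt (not_le.mp h2)
    · exact absurd (isPrimitiveRoot_pow_orderOf_div hord h4)
        (not_isPrimitiveRoot_four hα (pow_mem hx _))
    · exact absurd (isPrimitiveRoot_pow_orderOf_div hord hdvd)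
        (not_isPrimitiveRoot_of_odd_prime hα hp hodd (pow_mem hx _))
end
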